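/- arXiv:2208.03821 — 5 statements merged into one kernel-verified Lean document; each statement's English description precedes it below -/
import Mathlib

section
/- Let 1 ≤ p < ∞. There exist constants C₁ > 0 and C₂ > 0 such that C₁ \widetilde{‖f‖}_{∞,p} ≤ ‖f‖_{∞,p} ≤ C₂ \widetilde{‖f‖}_{∞,p} for every μ-measurable function f on ℝ. -/
open MeasureTheory Set
open scoped ENNReal

/-- The weighted Lebesgue measure `dμ(x) = (2^{k+1} Γ(k+1))⁻¹ |x|^{2k+1} dx`. -/
noncomputable def dunklMeasure (k : ℝ) : Measure ℝ :=
  (volume : Measure ℝ).withDensity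
    (fun x => ENNReal.ofReal ((2 ^ (k + 1) * Real.Gamma (k + 1))⁻¹ * |x| ^ (2 * k + 1)))
/-- The "ball" `B(x,r)`: for `x ≠ 0`, `{y : max 0 (|x|-r) < |y| < |x|+r}`; `B(0,r) = (-r,r)`. -/
def dunklBall (x r : ℝ) : Set ℝ :=
  if x = 0 then Set.Ioo (-r) r
  else {y : ℝ | max 0 (|x| - r) < |y| ∧ |y| < |x| + r}
/-- `Q_l = [l, l+1)`. -/
def Qcube (l : ℤ) : Set ℝ := Set.Ico (l : ℝ) ((l : ℝ) + 1)
/-- `_r‖f‖_{∞,p}`, the `L^p(μ)`-norm in `y` of `‖f χ_{B(y,r)}‖_{L^∞(μ)}`. -/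
noncomputable def rNorm (k : ℝ) (r : ℝ) (p : ℝ≥0∞) (f : ℝ → ℂ) : ℝ≥0∞ :=
  if p = ⊤ then
    essSup (fun y => eLpNorm ((dunklBall y r).indicator f) ⊤ (dunklMeasure k)) (dunklMeasure k)
  else
    (∫⁻ y, (eLpNorm ((dunklBall y r).indicator f) ⊤ (dunklMeasure k)) ^ p.toReal
        ∂(dunklMeasure k)) ^ (1 / p.toReal)
/-- `‖f‖_{∞,p} = _1‖f‖_{∞,p}`. -/
noncomputable def wNorm (k : ℝ) (p : ℝ≥0∞) (f : ℝ → ℂ) : ℝ≥0∞ := rNorm k 1 p f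
/-- The discrete norm `\widetilde{‖f‖}_{q,p}`. -/
noncomputable def tNorm (k : ℝ) (q p : ℝ≥0∞) (f : ℝ → ℂ) : ℝ≥0∞ :=
  if p = ⊤ then ⨆ l : ℤ, eLpNorm ((Qcube l).indicator f) q (dunklMeasure k)
  else (∑' l : ℤ,
      dunklMeasure k (Qcube l) * (eLpNorm ((Qcube l).indicator f) q (dunklMeasure k)) ^ p.toReal)
    ^ (1 / p.toReal)

/-!
For `y ∈ Q_l` the ball `B(y, 1)` contains `Q_l` up to the null point `0`, which gives the lower
bound with `C₁ = 1`. Conversely `B(y, 1)` is covered by the six cubes `Q_m` with `m` within `1` of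
`l` or of its mirror image `-1 - l`, and on these cubes `μ` is doubling: `μ(Q_l) ≤ D μ(Q_m)` with
`D = 2 · 4^(2k+1)`, because `μ` is even and its density `|x|^(2k+1)` grows polynomially. Summing
over `l`, every cube is counted six times, so `‖f‖_{∞,p}^p ≤ 6 D \widetilde{‖f‖}_{∞,p}^p`.
-/

noncomputable def dunklWeight (k x : ℝ) : ℝ :=
  (2 ^ (k + 1) * Real.Gamma (k + 1))⁻¹ * |x| ^ (2 * k + 1)

section Measure

variable {k : ℝ}

lemma dunklMeasure_eq_withDensity (k : ℝ) :
    dunklMeasure k = volume.withDensity (fun x => ENNReal.ofReal (dunklWeight k x)) := rfl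

instance (k : ℝ) : NullSingletonClass (dunklMeasure k) := by
  rw [dunklMeasure_eq_withDensity]; infer_instance

lemma dunklWeight_mul (k : ℝ) {t : ℝ} (ht : 0 ≤ t) (x : ℝ) :
    dunklWeight k (t * x) = t ^ (2 * k + 1) * dunklWeight k x := by
  simp only [dunklWeight, abs_mul, abs_of_nonneg ht, Real.mul_rpow ht (abs_nonneg x)]
  ring

lemma dunklWeight_le_of_abs_le (hk : -1/2 < k) {x y : ℝ} (h : |x| ≤ |y|) :
    dunklWeight k x ≤ dunklWeight k y := by
  have hΓ : 0 < Real.Gamma (k + 1) := Real.Gamma_pos_of_pos (by linarith)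
  unfold dunklWeight
  gcongr
  linarith

lemma dunklWeight_nonneg (hk : -1/2 < k) (x : ℝ) : 0 ≤ dunklWeight k x := by
  have hΓ : 0 < Real.Gamma (k + 1) := Real.Gamma_pos_of_pos (by linarith)
  unfold dunklWeight
  positivity

lemma dunklMeasure_preimage_neg (k : ℝ) {s : Set ℝ} (hs : MeasurableSet s) :
    dunklMeasure k (Neg.neg ⁻¹' s) = dunklMeasure k s := by
  rw [dunklMeasure_eq_withDensity, withDensity_apply _ hs,
    withDensity_apply _ (hs.preimage measurable_neg),
    ← lintegral_indicator hs, ← lintegral_indicator (hs.preimage measurable_neg),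
    ← (Measure.measurePreserving_neg volume).lintegral_comp_emb
      (MeasurableEquiv.neg ℝ).measurableEmbedding]
  congr 1
  funext x
  by_cases hx : x ∈ s
  · simp [indicator_of_mem, hx, dunklWeight]
  · simp [indicator_of_notMem, hx]

lemma ofReal_mul_sub_le_dunklMeasure_Ico (hk : -1/2 < k) {s t : ℝ} (hs : 0 ≤ s) :
    ENNReal.ofReal (dunklWeight k s * (t - s)) ≤ dunklMeasure k (Ico s t) := by
  rw [dunklMeasure_eq_withDensity, withDensity_apply _ measurableSet_Ico]
  calc ENNReal.ofReal (dunklWeight k s * (t - s))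
      = ∫⁻ _ in Ico s t, ENNReal.ofReal (dunklWeight k s) := by
        rw [setLIntegral_const, Real.volume_Ico, ENNReal.ofReal_mul (dunklWeight_nonneg hk s)]
    _ ≤ _ := setLIntegral_mono' measurableSet_Ico fun x hx => ENNReal.ofReal_le_ofReal <|
        dunklWeight_le_of_abs_le hk (by
          rw [abs_of_nonneg hs, abs_of_nonneg (hs.trans hx.1)]
          exact hx.1)

lemma dunklMeasure_Ico_le (hk : -1/2 < k) {s t : ℝ} (hs : 0 ≤ s) :
    dunklMeasure k (Ico s t) ≤ ENNReal.ofReal (dunklWeight k t * (t - s)) := by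
  rw [dunklMeasure_eq_withDensity, withDensity_apply _ measurableSet_Ico]
  calc _ ≤ ∫⁻ _ in Ico s t, ENNReal.ofReal (dunklWeight k t) :=
        setLIntegral_mono' measurableSet_Ico fun x hx => ENNReal.ofReal_le_ofReal <|
          dunklWeight_le_of_abs_le hk (by
            rw [abs_of_nonneg (hs.trans hx.1), abs_of_nonneg (hs.trans (hx.1.trans hx.2.le))]
            exact hx.2.le)
    _ = ENNReal.ofReal (dunklWeight k t * (t - s)) := by
        rw [setLIntegral_const, Real.volume_Ico, ENNReal.ofReal_mul (dunklWeight_nonneg hk t)]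

lemma measurableSet_Qcube (l : ℤ) : MeasurableSet (Qcube l) := measurableSet_Ico

lemma dunklMeasure_Qcube_reflect (k : ℝ) (l : ℤ) :
    dunklMeasure k (Qcube (-1 - l)) = dunklMeasure k (Qcube l) := by
  have hneg : Neg.neg ⁻¹' Qcube (-1 - l) = Ioc (l : ℝ) (l + 1) := by
    ext x
    simp only [Qcube, mem_preimage, mem_Ico, mem_Ioc, Int.cast_sub, Int.cast_neg, Int.cast_one]
    constructor <;> rintro ⟨h₁, h₂⟩ <;> constructor <;> linarith
  rw [← dunklMeasure_preimage_neg k (measurableSet_Qcube _), hneg, Qcube, measure_congr Ico_ae_eq_Ioc]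

noncomputable def cubeDoublingConst (k : ℝ) : ℝ≥0∞ := ENNReal.ofReal (2 * 4 ^ (2 * k + 1))

lemma one_le_cubeDoublingConst (hk : -1/2 < k) : 1 ≤ cubeDoublingConst k := by
  rw [cubeDoublingConst, ENNReal.one_le_ofReal]
  have : (1 : ℝ) ≤ 4 ^ (2 * k + 1) := Real.one_le_rpow (by norm_num) (by linarith)
  linarith

lemma dunklMeasure_Qcube_le_succ (hk : -1/2 < k) (n : ℕ) :
    dunklMeasure k (Qcube n) ≤ dunklMeasure k (Qcube (n + 1)) := by
  have hn : (0 : ℝ) ≤ n := n.cast_nonneg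
  calc dunklMeasure k (Qcube n) ≤ ENNReal.ofReal (dunklWeight k (n + 1) * 1) := by
        simpa [Qcube] using dunklMeasure_Ico_le hk (t := n + 1) hn
    _ ≤ dunklMeasure k (Qcube (n + 1)) := by
        simpa [Qcube, add_assoc] using
          ofReal_mul_sub_le_dunklMeasure_Ico hk (s := n + 1) (t := n + 1 + 1) (by linarith)

/-- `Q_{n+1}` is compared with the right half `[n + 1/2, n + 1)` of `Q_n`, on which the weight is
at least `w(n + 1/2) ≥ 4^{-(2k+1)} w(n + 2)` since `n + 2 ≤ 4 (n + 1/2)`. -/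
lemma dunklMeasure_Qcube_succ_le (hk : -1/2 < k) (n : ℕ) :
    dunklMeasure k (Qcube (n + 1)) ≤ cubeDoublingConst k * dunklMeasure k (Qcube n) := by
  have hn : (0 : ℝ) ≤ n := n.cast_nonneg
  have hhalf : Ico ((n : ℝ) + 1/2) (n + 1) ⊆ Qcube n := by
    intro x hx
    simp only [Qcube, Int.cast_natCast, mem_Ico] at hx ⊢
    constructor <;> linarith [hx.1, hx.2]
  have hweight : dunklWeight k (n + 2) ≤ 4 ^ (2 * k + 1) * dunklWeight k (n + 1/2) := by
    rw [← dunklWeight_mul k (by norm_num)]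
    exact dunklWeight_le_of_abs_le hk (by
      rw [abs_of_nonneg (by linarith), abs_of_nonneg (by linarith)]
      linarith)
  calc dunklMeasure k (Qcube (n + 1)) ≤ ENNReal.ofReal (dunklWeight k (n + 2) * 1) := by
        convert dunklMeasure_Ico_le hk (s := n + 1) (t := n + 2) (by linarith) using 2
        · rw [Qcube]; push_cast; ring_nf
        · ring
    _ ≤ cubeDoublingConst k * ENNReal.ofReal (dunklWeight k (n + 1/2) * (n + 1 - (n + 1/2))) := by
        rw [cubeDoublingConst, ← ENNReal.ofReal_mul (by positivity)]
        refine ENNReal.ofReal_le_ofReal ?_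
        nlinarith [dunklWeight_nonneg hk ((n : ℝ) + 1/2)]
    _ ≤ cubeDoublingConst k * dunklMeasure k (Qcube n) := by
        gcongr
        exact (ofReal_mul_sub_le_dunklMeasure_Ico hk (by positivity)).trans (measure_mono hhalf)

lemma dunklMeasure_Qcube_adjacent (hk : -1/2 < k) (l : ℤ) :
    dunklMeasure k (Qcube l) ≤ cubeDoublingConst k * dunklMeasure k (Qcube (l + 1)) ∧
      dunklMeasure k (Qcube (l + 1)) ≤ cubeDoublingConst k * dunklMeasure k (Qcube l) := by
  have le_const_mul (x : ℝ≥0∞) : x ≤ cubeDoublingConst k * x :=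
    le_mul_of_one_le_left' (one_le_cubeDoublingConst hk)
  have of_nat (n : ℕ) :
      dunklMeasure k (Qcube n) ≤ cubeDoublingConst k * dunklMeasure k (Qcube (n + 1)) ∧
      dunklMeasure k (Qcube (n + 1)) ≤ cubeDoublingConst k * dunklMeasure k (Qcube n) :=
    ⟨(dunklMeasure_Qcube_le_succ hk n).trans (le_const_mul _), dunklMeasure_Qcube_succ_le hk n⟩
  rcases le_or_gt 0 l with hl | hl
  · lift l to ℕ using hl
    exact of_nat l
  obtain ⟨n, rfl⟩ : ∃ n : ℕ, l = -1 - n := ⟨(-1 - l).toNat, by omega⟩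
  rcases n with _ | n
  · have h := dunklMeasure_Qcube_reflect k 0
    simp only [sub_zero, Nat.cast_zero, Int.reduceNeg, Int.reduceAdd] at h ⊢
    simp only [h, le_const_mul, and_self]
  · rw [show (-1 - ((n + 1 : ℕ) : ℤ) + 1) = -1 - n by push_cast; ring,
      dunklMeasure_Qcube_reflect, dunklMeasure_Qcube_reflect]
    push_cast
    exact (of_nat n).symm

/-- Indices of the cubes meeting `B(y, 1)` for `y ∈ Q_l`: the neighbours of `l` and of its mirror
image `-1 - l`. -/
noncomputable def cubeNbhd (l : ℤ) : Finset ℤ :=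
  Finset.Icc (l - 1) (l + 1) ∪ Finset.Icc (-l - 2) (-l)

lemma dunklMeasure_Qcube_le_of_mem_cubeNbhd (hk : -1/2 < k) {l m : ℤ} (hm : m ∈ cubeNbhd l) :
    dunklMeasure k (Qcube l) ≤ cubeDoublingConst k * dunklMeasure k (Qcube m) := by
  have near {m : ℤ} (hm : m ∈ Finset.Icc (l - 1) (l + 1)) :
      dunklMeasure k (Qcube l) ≤ cubeDoublingConst k * dunklMeasure k (Qcube m) := by
    rw [Finset.mem_Icc] at hm
    obtain rfl | rfl | rfl : m = l - 1 ∨ m = l ∨ m = l + 1 := by omega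
    · simpa using (dunklMeasure_Qcube_adjacent hk (l - 1)).2
    · exact le_mul_of_one_le_left' (one_le_cubeDoublingConst hk)
    · exact (dunklMeasure_Qcube_adjacent hk l).1
  rcases Finset.mem_union.1 hm with hm | hm
  · exact near hm
  · rw [← sub_sub_cancel (-1) m, dunklMeasure_Qcube_reflect]
    exact near (by simp only [Finset.mem_Icc] at hm ⊢; omega)

end Measure

section Geometry

lemma abs_sub_abs_lt_of_mem_dunklBall {y z r : ℝ} (hz : z ∈ dunklBall y r) : |(|z| - |y|)| < r := by
  unfold dunklBall at hz
  split_ifs at hz with hy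
  · subst hy
    simpa [abs_lt] using hz
  · exact abs_sub_lt_iff.2 ⟨by linarith [hz.2], by linarith [le_max_right 0 (|y| - r), hz.1]⟩

lemma mem_dunklBall_of_abs_sub_lt {y z r : ℝ} (hz : z ≠ 0) (h : |z - y| < r) :
    z ∈ dunklBall y r := by
  have habs := abs_abs_sub_abs_le_abs_sub z y
  obtain ⟨h₁, h₂⟩ := abs_lt.1 (habs.trans_lt h)
  unfold dunklBall
  split_ifs with hy
  · subst hy
    simpa [abs_lt] using h
  · exact ⟨max_lt (abs_pos.2 hz) (by linarith), by linarith⟩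

lemma mem_Qcube_iff_floor_eq {x : ℝ} {l : ℤ} : x ∈ Qcube l ↔ ⌊x⌋ = l := by
  rw [Int.floor_eq_iff]; rfl

lemma floor_mem_cubeNbhd {y z : ℝ} {l : ℤ} (hy : y ∈ Qcube l) (hz : z ∈ dunklBall y 1) :
    ⌊z⌋ ∈ cubeNbhd l := by
  obtain ⟨hly, hyl⟩ := hy
  have hmz := Int.floor_le z
  have hzm := Int.lt_floor_add_one z
  have hnear : |z - y| < 1 ∨ |z + y| < 1 := by
    obtain ⟨h₁, h₂⟩ := abs_lt.1 (abs_sub_abs_lt_of_mem_dunklBall hz)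
    rcases le_total 0 y with hy0 | hy0 <;> rcases le_total 0 z with hz0 | hz0 <;>
      simp only [abs_of_nonneg, abs_of_nonpos, hy0, hz0] at h₁ h₂
    · exact Or.inl (abs_sub_lt_iff.2 ⟨by linarith, by linarith⟩)
    · exact Or.inr (abs_lt.2 ⟨by linarith, by linarith⟩)
    · exact Or.inr (abs_lt.2 ⟨by linarith, by linarith⟩)
    · exact Or.inl (abs_sub_lt_iff.2 ⟨by linarith, by linarith⟩)
  simp only [cubeNbhd, Finset.mem_union, Finset.mem_Icc]
  rcases hnear with h | h <;> obtain ⟨h₁, h₂⟩ := abs_lt.1 h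
  · have a : l < ⌊z⌋ + 2 := by exact_mod_cast (by linarith : (l : ℝ) < ⌊z⌋ + 2)
    have b : ⌊z⌋ < l + 2 := by exact_mod_cast (by linarith : (⌊z⌋ : ℝ) < l + 2)
    omega
  · have a : l + ⌊z⌋ < 1 := by exact_mod_cast (by linarith : (l : ℝ) + ⌊z⌋ < 1)
    have b : -3 < l + ⌊z⌋ := by exact_mod_cast (by linarith : (-3 : ℝ) < l + ⌊z⌋)
    omega

lemma dunklBall_subset_biUnion_Qcube {y : ℝ} {l : ℤ} (hy : y ∈ Qcube l) :
    dunklBall y 1 ⊆ ⋃ m ∈ cubeNbhd l, Qcube m :=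
  fun z hz => mem_iUnion₂.2 ⟨⌊z⌋, floor_mem_cubeNbhd hy hz, mem_Qcube_iff_floor_eq.2 rfl⟩

lemma Qcube_ae_le_dunklBall (k : ℝ) {y : ℝ} {l : ℤ} (hy : y ∈ Qcube l) :
    Qcube l ≤ᵐ[dunklMeasure k] dunklBall y 1 := by
  refine ae_le_set.2 (measure_mono_null (fun z ⟨hz, hzB⟩ => ?_) (measure_singleton 0))
  by_contra hz0
  refine hzB (mem_dunklBall_of_abs_sub_lt hz0 (abs_sub_lt_iff.2 ⟨?_, ?_⟩)) <;>
    linarith [hy.1, hy.2, hz.1, hz.2]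

end Geometry

section EssSup

variable {α E : Type*} [MeasurableSpace α] [NormedAddCommGroup E] {μ : Measure α}

lemma eLpNorm_indicator_mono_ae {s t : Set α} (h : s ≤ᵐ[μ] t) (f : α → E) (p : ℝ≥0∞) :
    eLpNorm (s.indicator f) p μ ≤ eLpNorm (t.indicator f) p μ := by
  refine eLpNorm_mono_ae ?_
  filter_upwards [h] with x hx
  by_cases hxs : x ∈ s
  · rw [indicator_of_mem hxs, indicator_of_mem (hx hxs)]
  · simp [indicator_of_notMem hxs]

lemma exists_eLpNorm_top_indicator_le {ι : Type*} {J : Finset ι} (hJ : J.Nonempty) {s : ι → Set α}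
    {t : Set α} (h : t ⊆ ⋃ i ∈ J, s i) (f : α → E) :
    ∃ i ∈ J, eLpNorm (t.indicator f) ⊤ μ ≤ eLpNorm ((s i).indicator f) ⊤ μ := by
  obtain ⟨i, hi, hmax⟩ := J.exists_max_image (fun i => eLpNorm ((s i).indicator f) ⊤ μ) hJ
  refine ⟨i, hi, ?_⟩
  simp only [eLpNorm_exponent_top] at hmax ⊢
  refine essSup_le_of_ae_le _ ?_
  filter_upwards [(Filter.eventually_all_finset J).2
    fun j _ => enorm_ae_le_eLpNormEssSup ((s j).indicator f) μ] with x hx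
  by_cases hxt : x ∈ t
  · obtain ⟨j, hj, hxj⟩ := mem_iUnion₂.1 (h hxt)
    rw [indicator_of_mem hxt, ← indicator_of_mem hxj f]
    exact (hx j hj).trans (hmax j hj)
  · simp [indicator_of_notMem hxt]

end EssSup

section CubeDecomposition

lemma pairwise_disjoint_Qcube : Pairwise (Function.onFun Disjoint Qcube) := by
  have : Qcube = fun l : ℤ => Int.floor ⁻¹' {l} := by
    ext l x; exact mem_Qcube_iff_floor_eq
  rw [this]
  exact pairwise_disjoint_fiber _

lemma iUnion_Qcube : ⋃ l, Qcube l = univ :=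
  eq_univ_of_forall fun x => mem_iUnion.2 ⟨⌊x⌋, mem_Qcube_iff_floor_eq.2 rfl⟩

lemma lintegral_eq_tsum_setLIntegral_Qcube (μ : Measure ℝ) (g : ℝ → ℝ≥0∞) :
    ∫⁻ y, g y ∂μ = ∑' l, ∫⁻ y in Qcube l, g y ∂μ := by
  rw [← lintegral_iUnion measurableSet_Qcube pairwise_disjoint_Qcube, iUnion_Qcube,
    Measure.restrict_univ]

lemma self_mem_cubeNbhd (l : ℤ) : l ∈ cubeNbhd l := by
  simp only [cubeNbhd, Finset.mem_union, Finset.mem_Icc]; omega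

lemma tsum_sum_cubeNbhd_le (a : ℤ → ℝ≥0∞) : ∑' l, ∑ m ∈ cubeNbhd l, a m ≤ 6 * ∑' l, a l := by
  have hsplit (l : ℤ) :
      ∑ m ∈ cubeNbhd l, a m ≤ ∑ j ∈ Finset.Icc (-1 : ℤ) 1, (a (l + j) + a (-l - 1 + j)) := by
    have shift (c : ℤ) :
        ∑ j ∈ Finset.Icc (-1 : ℤ) 1, a (c + j) = ∑ m ∈ Finset.Icc (c - 1) (c + 1), a m := by
      rw [sub_eq_add_neg, ← Finset.map_add_left_Icc, Finset.sum_map]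
      rfl
    rw [Finset.sum_add_distrib, shift, shift, show -l - 1 - 1 = -l - 2 by ring,
      show -l - 1 + 1 = -l by ring, ← Finset.sum_union_inter]
    exact le_self_add
  calc ∑' l, ∑ m ∈ cubeNbhd l, a m
      ≤ ∑' l, ∑ j ∈ Finset.Icc (-1 : ℤ) 1, (a (l + j) + a (-l - 1 + j)) :=
        ENNReal.tsum_le_tsum hsplit
    _ = ∑ j ∈ Finset.Icc (-1 : ℤ) 1, ∑' l, (a (l + j) + a (-l - 1 + j)) :=
        Summable.tsum_finsetSum fun _ _ => ENNReal.summable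
    _ = ∑ _j ∈ Finset.Icc (-1 : ℤ) 1, 2 * ∑' l, a l := by
        refine Finset.sum_congr rfl fun j _ => ?_
        rw [ENNReal.tsum_add, two_mul]
        congr 1
        · exact (Equiv.addRight j).tsum_eq a
        · simpa [sub_eq_add_neg, add_assoc] using
            ((Equiv.neg ℤ).trans (Equiv.addRight (-1 + j))).tsum_eq a
    _ = 6 * ∑' l, a l := by
        rw [Finset.sum_const, show (Finset.Icc (-1 : ℤ) 1).card = 3 from rfl, nsmul_eq_mul,
          ← mul_assoc]
        norm_num

end CubeDecomposition

section NormComparison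

variable {k : ℝ} (f : ℝ → ℂ) {q : ℝ}

lemma tsum_dunklMeasure_Qcube_mul_le_lintegral (k : ℝ) (hq : 0 ≤ q) :
    ∑' l, dunklMeasure k (Qcube l) * eLpNorm ((Qcube l).indicator f) ⊤ (dunklMeasure k) ^ q
      ≤ ∫⁻ y, eLpNorm ((dunklBall y 1).indicator f) ⊤ (dunklMeasure k) ^ q ∂dunklMeasure k := by
  rw [lintegral_eq_tsum_setLIntegral_Qcube]
  refine ENNReal.tsum_le_tsum fun l => ?_
  rw [mul_comm, ← setLIntegral_const]
  exact setLIntegral_mono' (measurableSet_Qcube l) fun y hy =>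
    ENNReal.rpow_le_rpow (eLpNorm_indicator_mono_ae (Qcube_ae_le_dunklBall k hy) f ⊤) hq

lemma setLIntegral_Qcube_le (hk : -1/2 < k) (hq : 0 ≤ q) (l : ℤ) :
    ∫⁻ y in Qcube l, eLpNorm ((dunklBall y 1).indicator f) ⊤ (dunklMeasure k) ^ q ∂dunklMeasure k
      ≤ cubeDoublingConst k * ∑ m ∈ cubeNbhd l,
          dunklMeasure k (Qcube m) * eLpNorm ((Qcube m).indicator f) ⊤ (dunklMeasure k) ^ q := by
  set N : ℤ → ℝ≥0∞ := fun m => eLpNorm ((Qcube m).indicator f) ⊤ (dunklMeasure k)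
  have hball (y : ℝ) (hy : y ∈ Qcube l) :
      eLpNorm ((dunklBall y 1).indicator f) ⊤ (dunklMeasure k) ^ q ≤ ∑ m ∈ cubeNbhd l, N m ^ q := by
    obtain ⟨m, hm, hle⟩ := exists_eLpNorm_top_indicator_le ⟨l, self_mem_cubeNbhd l⟩
      (dunklBall_subset_biUnion_Qcube hy) f
    exact (ENNReal.rpow_le_rpow hle hq).trans
      (Finset.single_le_sum (f := fun m => N m ^ q) (fun _ _ => zero_le) hm)
  calc _ ≤ ∫⁻ _ in Qcube l, ∑ m ∈ cubeNbhd l, N m ^ q ∂dunklMeasure k :=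
        setLIntegral_mono' (measurableSet_Qcube l) hball
    _ = ∑ m ∈ cubeNbhd l, dunklMeasure k (Qcube l) * N m ^ q := by
        rw [setLIntegral_const, mul_comm, Finset.mul_sum]
    _ ≤ ∑ m ∈ cubeNbhd l, cubeDoublingConst k * dunklMeasure k (Qcube m) * N m ^ q :=
        Finset.sum_le_sum fun m hm => by
          gcongr
          exact dunklMeasure_Qcube_le_of_mem_cubeNbhd hk hm
    _ = _ := by
        rw [Finset.mul_sum]
        simp only [mul_assoc]
        rfl

lemma lintegral_le_mul_tsum_dunklMeasure_Qcube_mul (hk : -1/2 < k) (hq : 0 ≤ q) :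
    ∫⁻ y, eLpNorm ((dunklBall y 1).indicator f) ⊤ (dunklMeasure k) ^ q ∂dunklMeasure k
      ≤ 6 * cubeDoublingConst k * ∑' l,
          dunklMeasure k (Qcube l) * eLpNorm ((Qcube l).indicator f) ⊤ (dunklMeasure k) ^ q := by
  calc _ = _ := lintegral_eq_tsum_setLIntegral_Qcube _ _
    _ ≤ _ := ENNReal.tsum_le_tsum (setLIntegral_Qcube_le f hk hq)
    _ = _ := ENNReal.tsum_mul_left
    _ ≤ cubeDoublingConst k * (6 * ∑' l,
          dunklMeasure k (Qcube l) * eLpNorm ((Qcube l).indicator f) ⊤ (dunklMeasure k) ^ q) := by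
        gcongr
        exact tsum_sum_cubeNbhd_le _
    _ = _ := by ring

end NormComparison

theorem stmt6_general (k : ℝ) (hk : -1/2 < k) (p : ℝ≥0∞) (hp : p ≠ ⊤) :
    ∃ C₁ C₂ : ℝ≥0∞, 0 < C₁ ∧ C₁ ≠ ⊤ ∧ 0 < C₂ ∧ C₂ ≠ ⊤ ∧
      ∀ f : ℝ → ℂ, Measurable f →
        C₁ * tNorm k ⊤ p f ≤ wNorm k p f ∧ wNorm k p f ≤ C₂ * tNorm k ⊤ p f := by
  have hq : 0 ≤ p.toReal := ENNReal.toReal_nonneg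
  have hC_pos : 0 < 6 * cubeDoublingConst k :=
    ENNReal.mul_pos (by norm_num) (zero_lt_one.trans_le (one_le_cubeDoublingConst hk)).ne'
  have hC_ne_top : 6 * cubeDoublingConst k ≠ ⊤ :=
    ENNReal.mul_ne_top (by norm_num) ENNReal.ofReal_ne_top
  refine ⟨1, (6 * cubeDoublingConst k) ^ (1 / p.toReal), one_pos, ENNReal.one_ne_top,
    ENNReal.rpow_pos hC_pos hC_ne_top, ENNReal.rpow_ne_top_of_nonneg (by positivity) hC_ne_top,
    fun f _ => ?_⟩
  simp only [wNorm, rNorm, tNorm, if_neg hp, one_mul]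
  constructor
  · exact ENNReal.rpow_le_rpow (tsum_dunklMeasure_Qcube_mul_le_lintegral f k hq) (by positivity)
  · rw [← ENNReal.mul_rpow_of_nonneg _ _ (by positivity)]
    exact ENNReal.rpow_le_rpow (lintegral_le_mul_tsum_dunklMeasure_Qcube_mul f hk hq)
      (by positivity)

/-- For `1 ≤ p < ∞` there are constants `C₁, C₂ > 0` with
`C₁ \widetilde{‖f‖}_{∞,p} ≤ ‖f‖_{∞,p} ≤ C₂ \widetilde{‖f‖}_{∞,p}` for every measurable `f`. -/
theorem stmt6 (k : ℝ) (hk : -1/2 < k) (p : ℝ≥0∞) (hp1 : 1 ≤ p) (hp : p ≠ ⊤) :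
    ∃ C₁ C₂ : ℝ≥0∞, 0 < C₁ ∧ C₁ ≠ ⊤ ∧ 0 < C₂ ∧ C₂ ≠ ⊤ ∧
      ∀ f : ℝ → ℂ, Measurable f →
        C₁ * tNorm k ⊤ p f ≤ wNorm k p f ∧ wNorm k p f ≤ C₂ * tNorm k ⊤ p f :=
  stmt6_general k hk p hp
end

section
/- Let 1 ≤ p ≤ ∞ and let m be a nonnegative integer with m > (2k+2)/p (any nonnegative m if p = ∞). Then there exists a constant C > 0 such that for every Schwartz function f on ℝ, ‖f‖_{∞,p} ≤ C 𝒩_m(f); consequently the Schwartz space 𝒮(ℝ) is continuously embedded in the space of μ-measurable f with ‖f‖_{∞,p} < ∞. -/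
open MeasureTheory Set
open scoped ENNReal

/-- `𝒩_m(f) = sup_x (1+|x|)^m Σ_{n ≤ m} |f^{(n)}(x)|`. -/
noncomputable def schwartzSemi (m : ℕ) (f : SchwartzMap ℝ ℂ) : ℝ :=
  ⨆ x : ℝ, (1 + |x|) ^ m * ∑ n ∈ Finset.range (m + 1), ‖iteratedDeriv n (⇑f) x‖

lemma schwartzSemi_nonneg (m : ℕ) (f : SchwartzMap ℝ ℂ) : 0 ≤ schwartzSemi m f :=
  Real.iSup_nonneg fun x => mul_nonneg (by positivity)
    (Finset.sum_nonneg fun _ _ => norm_nonneg _)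

lemma schwartz_decay (m : ℕ) (f : SchwartzMap ℝ ℂ) (x : ℝ) :
    (1 + |x|) ^ m * ‖f x‖ ≤ schwartzSemi m f := by
  set S : ℝ := (Finset.Iic (m, m)).sup (fun mm => SchwartzMap.seminorm ℝ mm.1 mm.2) f with hS
  have hb : BddAbove (Set.range fun x : ℝ =>
      (1 + |x|) ^ m * ∑ n ∈ Finset.range (m + 1), ‖iteratedDeriv n (⇑f) x‖) := by
    refine ⟨(m + 1) * (2 ^ m * S), ?_⟩
    rintro _ ⟨x, rfl⟩
    show (1 + |x|) ^ m * ∑ n ∈ Finset.range (m + 1), ‖iteratedDeriv n (⇑f) x‖ ≤ _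
    rw [Finset.mul_sum]
    calc ∑ n ∈ Finset.range (m + 1), (1 + |x|) ^ m * ‖iteratedDeriv n (⇑f) x‖
        ≤ ∑ _n ∈ Finset.range (m + 1), 2 ^ m * S := by
          refine Finset.sum_le_sum fun n hn => ?_
          rw [← norm_iteratedFDeriv_eq_norm_iteratedDeriv, ← Real.norm_eq_abs]
          exact SchwartzMap.one_add_le_sup_seminorm_apply (𝕜 := ℝ) (m := (m, m)) le_rfl
            (Nat.lt_succ_iff.mp (Finset.mem_range.mp hn)) f x
      _ = (m + 1) * (2 ^ m * S) := by
          rw [Finset.sum_const, Finset.card_range, nsmul_eq_mul]; push_cast; ring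
  have h0 : (1 + |x|) ^ m * ‖f x‖ ≤
      (1 + |x|) ^ m * ∑ n ∈ Finset.range (m + 1), ‖iteratedDeriv n (⇑f) x‖ := by
    refine mul_le_mul_of_nonneg_left ?_ (by positivity)
    have h1 : ‖f x‖ = ‖iteratedDeriv 0 (⇑f) x‖ := by simp
    rw [h1]
    exact Finset.single_le_sum (f := fun n => ‖iteratedDeriv n (⇑f) x‖)
      (fun n _ => norm_nonneg _) (Finset.mem_range.mpr (Nat.succ_pos m))
  exact h0.trans (le_ciSup hb x)

lemma dunklBall_le (y x : ℝ) (hx : x ∈ dunklBall y 1) : 1 + |y| ≤ 2 * (1 + |x|) := by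
  unfold dunklBall at hx
  split_ifs at hx with h
  · subst h
    have := abs_nonneg x
    simp only [abs_zero]
    linarith
  · obtain ⟨h1, h2⟩ := hx
    have h3 : |y| - 1 ≤ max 0 (|y| - 1) := le_max_right _ _
    have := abs_nonneg x
    linarith

lemma indicator_bound (m : ℕ) (f : SchwartzMap ℝ ℂ) (y x : ℝ) :
    ‖((dunklBall y 1).indicator (⇑f)) x‖ ≤
      (2 ^ m * schwartzSemi m f) * (1 + |y|) ^ (-(m : ℝ)) := by
  have hN := schwartzSemi_nonneg m f
  have hy : (0 : ℝ) < 1 + |y| := by positivity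
  by_cases hx : x ∈ dunklBall y 1
  · rw [Set.indicator_of_mem hx]
    have hpow : (1 + |y|) ^ m ≤ (2 * (1 + |x|)) ^ m :=
      pow_le_pow_left₀ hy.le (dunklBall_le y x hx) m
    rw [Real.rpow_neg hy.le, Real.rpow_natCast, ← div_eq_mul_inv,
      le_div_iff₀ (by positivity)]
    calc ‖f x‖ * (1 + |y|) ^ m ≤ ‖f x‖ * (2 * (1 + |x|)) ^ m :=
          mul_le_mul_of_nonneg_left hpow (norm_nonneg _)
      _ = 2 ^ m * ((1 + |x|) ^ m * ‖f x‖) := by rw [mul_pow]; ring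
      _ ≤ 2 ^ m * schwartzSemi m f := by
          exact mul_le_mul_of_nonneg_left (schwartz_decay m f x) (by positivity)
  · rw [Set.indicator_of_notMem hx, norm_zero]
    have : (0:ℝ) ≤ (1 + |y|) ^ (-(m : ℝ)) := Real.rpow_nonneg hy.le _
    positivity

lemma elp_bound (k : ℝ) (m : ℕ) (f : SchwartzMap ℝ ℂ) (y : ℝ) :
    eLpNorm ((dunklBall y 1).indicator (⇑f)) ⊤ (dunklMeasure k) ≤
      ENNReal.ofReal ((2 ^ m * schwartzSemi m f) * (1 + |y|) ^ (-(m : ℝ))) := by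
  rw [eLpNorm_exponent_top]
  exact eLpNormEssSup_le_of_ae_bound (ae_of_all _ (indicator_bound m f y))

lemma dunkl_I_lt_top (k : ℝ) (hk : -1/2 < k) {r : ℝ} (hr : 2 * k + 2 < r) :
    (∫⁻ y, ENNReal.ofReal ((1 + |y|) ^ (-r)) ∂(dunklMeasure k)) < ⊤ := by
  have hΓ : 0 < Real.Gamma (k + 1) := Real.Gamma_pos_of_pos (by linarith)
  have h2 : (0 : ℝ) < 2 ^ (k + 1) := Real.rpow_pos_of_pos (by norm_num) _
  have hc : (0 : ℝ) ≤ (2 ^ (k + 1) * Real.Gamma (k + 1))⁻¹ := by positivity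
  have hmd : Measurable fun x : ℝ =>
      ENNReal.ofReal ((2 ^ (k + 1) * Real.Gamma (k + 1))⁻¹ * |x| ^ (2 * k + 1)) := by
    fun_prop
  have hmg : Measurable fun y : ℝ => ENNReal.ofReal ((1 + |y|) ^ (-r)) := by fun_prop
  rw [dunklMeasure, lintegral_withDensity_eq_lintegral_mul _ hmd hmg]
  have hmono : ∀ y : ℝ,
      ((fun x => ENNReal.ofReal ((2 ^ (k + 1) * Real.Gamma (k + 1))⁻¹ * |x| ^ (2 * k + 1))) *
        fun y => ENNReal.ofReal ((1 + |y|) ^ (-r))) y ≤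
      ENNReal.ofReal ((2 ^ (k + 1) * Real.Gamma (k + 1))⁻¹) *
        ENNReal.ofReal ((1 + |y|) ^ (-(r - (2 * k + 1)))) := by
    intro y
    have hy : (0 : ℝ) < 1 + |y| := by positivity
    simp only [Pi.mul_apply]
    rw [ENNReal.ofReal_mul hc, mul_assoc]
    refine mul_le_mul_right ?_ _
    rw [← ENNReal.ofReal_mul (Real.rpow_nonneg (abs_nonneg y) _)]
    refine ENNReal.ofReal_le_ofReal ?_
    have h1 : |y| ^ (2 * k + 1) ≤ (1 + |y|) ^ (2 * k + 1) :=
      Real.rpow_le_rpow (abs_nonneg y) (by linarith) (by linarith)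
    calc |y| ^ (2 * k + 1) * (1 + |y|) ^ (-r)
        ≤ (1 + |y|) ^ (2 * k + 1) * (1 + |y|) ^ (-r) := by
          exact mul_le_mul_of_nonneg_right h1 (Real.rpow_nonneg hy.le _)
      _ = (1 + |y|) ^ (-(r - (2 * k + 1))) := by
          rw [← Real.rpow_add hy]; ring_nf
  refine lt_of_le_of_lt (lintegral_mono hmono) ?_
  rw [lintegral_const_mul' _ _ ENNReal.ofReal_ne_top]
  refine ENNReal.mul_lt_top ENNReal.ofReal_lt_top ?_
  have hint : Integrable (fun y : ℝ => (1 + ‖y‖) ^ (-(r - (2 * k + 1)))) volume := by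
    apply integrable_one_add_norm
    simp only [Module.finrank_self]
    push_cast
    linarith
  have := hint.lintegral_lt_top
  simpa only [Real.norm_eq_abs] using this

/-- For `1 ≤ p ≤ ∞` and a nonnegative integer `m` with `m > (2k+2)/p` (any `m` if `p = ∞`),
there is `C > 0` with `‖f‖_{∞,p} ≤ C 𝒩_m(f)` for every Schwartz function `f`. -/
theorem stmt8 (k : ℝ) (hk : -1/2 < k) (p : ℝ≥0∞) (hp1 : 1 ≤ p) (m : ℕ)
    (hm : p ≠ ⊤ → (2 * k + 2) / p.toReal < (m : ℝ)) :
    ∃ C : ℝ, 0 < C ∧ ∀ f : SchwartzMap ℝ ℂ,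
      wNorm k p (⇑f) ≤ ENNReal.ofReal (C * schwartzSemi m f) := by
  by_cases hp : p = ⊤
  · refine ⟨2 ^ m, by positivity, fun f => ?_⟩
    have hN := schwartzSemi_nonneg m f
    rw [wNorm, rNorm, if_pos hp]
    refine essSup_le_of_ae_le _ (ae_of_all _ fun y => ?_)
    refine (elp_bound k m f y).trans (ENNReal.ofReal_le_ofReal ?_)
    have hy : (0 : ℝ) < 1 + |y| := by positivity
    have h1 : (1 + |y|) ^ (-(m : ℝ)) ≤ 1 :=
      Real.rpow_le_one_of_one_le_of_nonpos (by linarith [abs_nonneg y])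
        (neg_nonpos.mpr (Nat.cast_nonneg m))
    calc 2 ^ m * schwartzSemi m f * (1 + |y|) ^ (-(m : ℝ))
        ≤ 2 ^ m * schwartzSemi m f * 1 :=
          mul_le_mul_of_nonneg_left h1 (by positivity)
      _ = 2 ^ m * schwartzSemi m f := mul_one _
  · set q := p.toReal with hq
    have hq1 : (1 : ℝ) ≤ q := by
      rw [hq, ← ENNReal.toReal_one]
      exact ENNReal.toReal_mono hp hp1
    have hq0 : (0 : ℝ) < q := by linarith
    have hmq : 2 * k + 2 < (m : ℝ) * q := by
      have := hm hp
      rw [div_lt_iff₀ hq0] at this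
      linarith
    set I : ℝ≥0∞ := ∫⁻ y, ENNReal.ofReal ((1 + |y|) ^ (-((m : ℝ) * q))) ∂(dunklMeasure k)
      with hI
    have hIlt : I < ⊤ := dunkl_I_lt_top k hk hmq
    have hJ : I ^ (1 / q) ≠ ⊤ :=
      (ENNReal.rpow_lt_top_of_nonneg (by positivity) hIlt.ne).ne
    refine ⟨2 ^ m * (I ^ (1 / q)).toReal + 1, by positivity, fun f => ?_⟩
    have hN := schwartzSemi_nonneg m f
    rw [wNorm, rNorm, if_neg hp]
    have step1 : (∫⁻ y, (eLpNorm ((dunklBall y 1).indicator (⇑f)) ⊤ (dunklMeasure k)) ^ q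
        ∂(dunklMeasure k)) ≤ ENNReal.ofReal (2 ^ m * schwartzSemi m f) ^ q * I := by
      calc (∫⁻ y, (eLpNorm ((dunklBall y 1).indicator (⇑f)) ⊤ (dunklMeasure k)) ^ q
            ∂(dunklMeasure k))
          ≤ ∫⁻ y, (ENNReal.ofReal ((2 ^ m * schwartzSemi m f) * (1 + |y|) ^ (-(m : ℝ)))) ^ q
            ∂(dunklMeasure k) :=
            lintegral_mono fun y => ENNReal.rpow_le_rpow (elp_bound k m f y) hq0.le
        _ = ∫⁻ y, ENNReal.ofReal (2 ^ m * schwartzSemi m f) ^ q *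
              ENNReal.ofReal ((1 + |y|) ^ (-((m : ℝ) * q))) ∂(dunklMeasure k) := by
            congr 1
            funext y
            have hy : (0 : ℝ) < 1 + |y| := by positivity
            rw [ENNReal.ofReal_mul (by positivity), ENNReal.mul_rpow_of_nonneg _ _ hq0.le,
              ENNReal.ofReal_rpow_of_nonneg (Real.rpow_nonneg hy.le _) hq0.le,
              ← Real.rpow_mul hy.le, neg_mul]
        _ = ENNReal.ofReal (2 ^ m * schwartzSemi m f) ^ q * I :=
            lintegral_const_mul' _ _
              (ENNReal.rpow_ne_top_of_nonneg hq0.le ENNReal.ofReal_ne_top)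
    calc (∫⁻ y, (eLpNorm ((dunklBall y 1).indicator (⇑f)) ⊤ (dunklMeasure k)) ^ q
          ∂(dunklMeasure k)) ^ (1 / q)
        ≤ (ENNReal.ofReal (2 ^ m * schwartzSemi m f) ^ q * I) ^ (1 / q) :=
          ENNReal.rpow_le_rpow step1 (one_div_nonneg.mpr hq0.le)
      _ = ENNReal.ofReal (2 ^ m * schwartzSemi m f) * I ^ (1 / q) := by
          rw [ENNReal.mul_rpow_of_nonneg _ _ (one_div_nonneg.mpr hq0.le),
            ← ENNReal.rpow_mul, mul_one_div, div_self hq0.ne', ENNReal.rpow_one]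
      _ = ENNReal.ofReal (2 ^ m * schwartzSemi m f * (I ^ (1 / q)).toReal) := by
          conv_lhs => rw [← ENNReal.ofReal_toReal hJ]
          rw [← ENNReal.ofReal_mul (by positivity)]
      _ ≤ ENNReal.ofReal ((2 ^ m * (I ^ (1 / q)).toReal + 1) * schwartzSemi m f) := by
          refine ENNReal.ofReal_le_ofReal ?_
          have ht : (0 : ℝ) ≤ (I ^ (1 / q)).toReal := ENNReal.toReal_nonneg
          nlinarith
end

section
/- Let 1 ≤ p₁ ≤ p₂ ≤ ∞. There exists a constant C > 0 such that ‖f‖_{∞,p₂} ≤ C ‖f‖_{∞,p₁} for every μ-measurable function f on ℝ. -/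
open MeasureTheory Set
open scoped ENNReal

/-!
Write `g y = ‖f χ_{B(y,1)}‖_∞`. Off the origin, `B(y,r)` is the radial band `||x| - |y|| < r`,
so `B(y,1)` is covered by three bands of radius `1/2` with centres `c ≥ 0`, and the band of
radius `1/2` around `c` lies in `B(z,1)` for every `z ∈ [c + 1/4, c + 1/2]`. These intervals have
`μ`-mass bounded below uniformly in `c`, which gives `g y ≤ C ‖g‖_{p₁}` for every `y`.
The theorem then follows from `‖g‖_{p₂} ≤ ‖g‖_∞ ^ (1 - p₁/p₂) ‖g‖_{p₁} ^ (p₁/p₂)`.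
-/

section LpBounds

variable {α : Type*} [MeasurableSpace α] {μ : Measure α}

lemma mul_rpow_measure_le_eLpNorm {g : α → ℝ≥0∞} {s : Set α} {b p : ℝ≥0∞}
    (hs : MeasurableSet s) (hp0 : p ≠ 0) (hptop : p ≠ ∞) (hb : ∀ x ∈ s, b ≤ g x) :
    b * μ s ^ (1 / p.toReal) ≤ eLpNorm g p μ :=
  calc b * μ s ^ (1 / p.toReal) = eLpNorm (s.indicator fun _ ↦ b) p μ := by
        rw [eLpNorm_indicator_const hs hp0 hptop, enorm_eq_self]
    _ ≤ eLpNorm g p μ := eLpNorm_mono_enorm fun x ↦ by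
        by_cases hx : x ∈ s
        · simpa [hx] using hb x hx
        · simp [hx]

lemma eLpNorm_top_indicator_union_le {E : Type*} [NormedAddCommGroup E] (s t : Set α)
    (f : α → E) :
    eLpNorm ((s ∪ t).indicator f) ∞ μ ≤
      eLpNorm (s.indicator f) ∞ μ + eLpNorm (t.indicator f) ∞ μ :=
  calc eLpNorm ((s ∪ t).indicator f) ∞ μ
      ≤ eLpNorm ((fun x ↦ ‖s.indicator f x‖ₑ) + fun x ↦ ‖t.indicator f x‖ₑ) ∞ μ :=
        eLpNorm_mono_enorm fun x ↦ by
          by_cases hs : x ∈ s <;> by_cases ht : x ∈ t <;> simp [hs, ht]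
    _ ≤ eLpNorm (fun x ↦ ‖s.indicator f x‖ₑ) ∞ μ +
          eLpNorm (fun x ↦ ‖t.indicator f x‖ₑ) ∞ μ := by
        simpa only [eLpNorm_exponent_top] using eLpNormEssSup_add_le
    _ = eLpNorm (s.indicator f) ∞ μ + eLpNorm (t.indicator f) ∞ μ := by
        rw [eLpNorm_enorm, eLpNorm_enorm]

-- For `p₂ = ∞` the exponent is `1 - p₁.toReal / 0 = 1`, since `ENNReal.toReal ∞ = 0`.
theorem eLpNorm_le_rpow_mul_eLpNorm_of_forall_le {g : α → ℝ≥0∞} {p₁ p₂ C : ℝ≥0∞}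
    (hp₁0 : p₁ ≠ 0) (hp₁top : p₁ ≠ ∞) (hp : p₁ ≤ p₂) (hC0 : C ≠ 0) (hCtop : C ≠ ∞)
    (hg : ∀ x, g x ≤ C * eLpNorm g p₁ μ) :
    eLpNorm g p₂ μ ≤ C ^ (1 - p₁.toReal / p₂.toReal) * eLpNorm g p₁ μ := by
  set N := eLpNorm g p₁ μ
  rcases eq_or_ne p₂ ∞ with rfl | hp₂top
  · simpa using eLpNormEssSup_le_of_ae_enorm_bound (ae_of_all μ hg)
  set q₁ := p₁.toReal
  set q₂ := p₂.toReal
  have hq₁ : 0 < q₁ := ENNReal.toReal_pos hp₁0 hp₁top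
  have hq : q₁ ≤ q₂ := ENNReal.toReal_mono hp₂top hp
  have hq₂ : 0 < q₂ := hq₁.trans_le hq
  have hexp : 0 ≤ 1 - q₁ / q₂ := sub_nonneg.2 (div_le_one_of_le₀ hq hq₂.le)
  rcases eq_or_ne N ∞ with hN | hN
  · rw [hN, ENNReal.mul_top (ENNReal.rpow_pos (pos_iff_ne_zero.2 hC0) hCtop).ne']
    exact le_top
  have hCN : (C * N) ^ (q₂ - q₁) ≠ ∞ :=
    ENNReal.rpow_ne_top_of_nonneg (sub_nonneg.2 hq) (ENNReal.mul_ne_top hCtop hN)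
  have hpt : ∀ x, g x ^ q₂ ≤ (C * N) ^ (q₂ - q₁) * g x ^ q₁ := fun x ↦
    calc g x ^ q₂ = g x ^ (q₂ - q₁) * g x ^ q₁ := by
          rw [← ENNReal.rpow_add_of_nonneg _ _ (sub_nonneg.2 hq) hq₁.le, sub_add_cancel]
      _ ≤ (C * N) ^ (q₂ - q₁) * g x ^ q₁ := by gcongr; exact hg x
  have hint : ∫⁻ x, g x ^ q₂ ∂μ ≤ (C * N) ^ (q₂ - q₁) * N ^ q₁ :=
    calc ∫⁻ x, g x ^ q₂ ∂μ ≤ ∫⁻ x, (C * N) ^ (q₂ - q₁) * g x ^ q₁ ∂μ := lintegral_mono hpt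
      _ = (C * N) ^ (q₂ - q₁) * N ^ q₁ := by
          rw [lintegral_const_mul' _ _ hCN, show N = eLpNorm' g q₁ μ from
            eLpNorm_eq_eLpNorm' hp₁0 hp₁top, ← lintegral_rpow_enorm_eq_rpow_eLpNorm' hq₁]
          simp only [enorm_eq_self]
  have hp₂0 : p₂ ≠ 0 := (pos_iff_ne_zero.2 hp₁0 |>.trans_le hp).ne'
  have hp₂ : eLpNorm g p₂ μ = (∫⁻ x, g x ^ q₂ ∂μ) ^ (1 / q₂) := by
    simp only [eLpNorm_eq_lintegral_rpow_enorm_toReal hp₂0 hp₂top, enorm_eq_self, q₂]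
  calc eLpNorm g p₂ μ ≤ ((C * N) ^ (q₂ - q₁) * N ^ q₁) ^ (1 / q₂) := by
        rw [hp₂]; gcongr
    _ = C ^ (1 - q₁ / q₂) * (N ^ (1 - q₁ / q₂) * N ^ (q₁ / q₂)) := by
        have h1 : (q₂ - q₁) * (1 / q₂) = 1 - q₁ / q₂ := by field_simp
        have h2 : q₁ * (1 / q₂) = q₁ / q₂ := by ring
        rw [ENNReal.mul_rpow_of_nonneg _ _ (by positivity), ← ENNReal.rpow_mul,
          ← ENNReal.rpow_mul, h1, h2, ENNReal.mul_rpow_of_nonneg _ _ hexp, mul_assoc]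
    _ = C ^ (1 - q₁ / q₂) * N := by
        rw [← ENNReal.rpow_add_of_nonneg _ _ hexp (by positivity), sub_add_cancel,
          ENNReal.rpow_one]

end LpBounds

instance inst_s11 (k : ℝ) : NullSingletonClass (dunklMeasure k) := by
  unfold dunklMeasure; infer_instance

def radialBand (a r : ℝ) : Set ℝ := {x | |(|x| - a)| < r}

lemma radialBand_subset_radialBand {a b r s : ℝ} (h : |a - b| + r ≤ s) :
    radialBand a r ⊆ radialBand b s := fun x hx ↦
  calc |(|x| - b)| ≤ |(|x| - a)| + |a - b| := abs_sub_le _ _ _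
    _ < s := by simp only [radialBand, mem_ofPred_eq] at hx; linarith

lemma radialBand_one_subset (a : ℝ) :
    radialBand a 1 ⊆
      radialBand (max (a - 2⁻¹) 0) 2⁻¹ ∪ radialBand a 2⁻¹ ∪ radialBand (a + 2⁻¹) 2⁻¹ := by
  intro x hx
  simp only [radialBand, mem_union, mem_ofPred_eq, abs_sub_lt_iff] at hx ⊢
  have hx0 := abs_nonneg x
  rcases le_or_gt |x| (a - 2⁻¹) with h | h
  · rw [max_eq_left (by linarith)]
    left; left; constructor <;> linarith
  rcases lt_or_ge |x| (a + 2⁻¹) with h' | h'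
  · left; right; constructor <;> linarith
  · right; constructor <;> linarith

lemma mem_dunklBall_iff {x : ℝ} (hx : x ≠ 0) (y r : ℝ) :
    x ∈ dunklBall y r ↔ x ∈ radialBand |y| r := by
  have hx0 := abs_pos.2 hx
  unfold dunklBall radialBand
  split_ifs with hy
  · simp [hy, abs_lt]
  · simp only [mem_ofPred_eq, max_lt_iff, abs_sub_lt_iff]
    constructor
    · rintro ⟨⟨-, h₁⟩, h₂⟩; constructor <;> linarith
    · rintro ⟨h₁, h₂⟩; exact ⟨⟨hx0, by linarith⟩, by linarith⟩

lemma dunklBall_ae_eq_radialBand (k y r : ℝ) :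
    dunklBall y r =ᵐ[dunklMeasure k] radialBand |y| r := by
  filter_upwards [(dunklMeasure k).ae_ne 0] with x hx
  exact propext (mem_dunklBall_iff hx y r)

noncomputable def dunklLocalSup (k r : ℝ) (f : ℝ → ℂ) (y : ℝ) : ℝ≥0∞ :=
  eLpNorm ((dunklBall y r).indicator f) ∞ (dunklMeasure k)

lemma dunklLocalSup_eq (k r : ℝ) (f : ℝ → ℂ) (y : ℝ) :
    dunklLocalSup k r f y = eLpNorm ((radialBand |y| r).indicator f) ∞ (dunklMeasure k) :=
  eLpNorm_congr_ae (indicator_ae_eq_of_ae_eq_set (dunklBall_ae_eq_radialBand k y r))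

lemma rNorm_eq_eLpNorm (k r : ℝ) {p : ℝ≥0∞} (hp : p ≠ 0) (f : ℝ → ℂ) :
    rNorm k r p f = eLpNorm (dunklLocalSup k r f) p (dunklMeasure k) := by
  unfold rNorm
  split_ifs with hptop
  · simp [hptop, eLpNorm_exponent_top, eLpNormEssSup, dunklLocalSup]
  · simp [eLpNorm_eq_lintegral_rpow_enorm_toReal hp hptop, dunklLocalSup]

noncomputable def dunklMassLowerBound (k : ℝ) : ℝ≥0∞ :=
  ENNReal.ofReal ((2 ^ (k + 1) * Real.Gamma (k + 1))⁻¹ * 4⁻¹ ^ (2 * k + 1) * 4⁻¹)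

lemma dunklMassLowerBound_pos {k : ℝ} (hk : -1 < k) : 0 < dunklMassLowerBound k := by
  have := Real.Gamma_pos_of_pos (by linarith : 0 < k + 1)
  unfold dunklMassLowerBound
  positivity

lemma dunklMassLowerBound_le {k : ℝ} (hk : -1/2 ≤ k) {c : ℝ} (hc : 0 ≤ c) :
    dunklMassLowerBound k ≤ dunklMeasure k (Icc (c + 4⁻¹) (c + 2⁻¹)) := by
  have hΓ := Real.Gamma_pos_of_pos (by linarith : 0 < k + 1)
  rw [dunklMeasure, withDensity_apply _ measurableSet_Icc]
  calc dunklMassLowerBound k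
      = ∫⁻ _ in Icc (c + 4⁻¹) (c + 2⁻¹),
          ENNReal.ofReal ((2 ^ (k + 1) * Real.Gamma (k + 1))⁻¹ * 4⁻¹ ^ (2 * k + 1)) := by
        rw [setLIntegral_const, Real.volume_Icc, ← ENNReal.ofReal_mul (by positivity)]
        norm_num [dunklMassLowerBound]
    _ ≤ _ := setLIntegral_mono' measurableSet_Icc fun x hx ↦ by
        have hx4 : 4⁻¹ ≤ |x| := by rw [abs_of_nonneg (by linarith [hx.1])]; linarith [hx.1]
        gcongr
        linarith

noncomputable def dunklSupConst (k : ℝ) (p : ℝ≥0∞) : ℝ≥0∞ :=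
  3 * (dunklMassLowerBound k ^ (1 / p.toReal))⁻¹

lemma dunklSupConst_pos {k : ℝ} (hk : -1 < k) (p : ℝ≥0∞) : 0 < dunklSupConst k p :=
  ENNReal.mul_pos three_ne_zero (ENNReal.inv_ne_zero.2
    (ENNReal.rpow_ne_top_of_ne_zero (dunklMassLowerBound_pos hk).ne' ENNReal.ofReal_ne_top))

lemma dunklSupConst_ne_top {k : ℝ} (hk : -1 < k) (p : ℝ≥0∞) : dunklSupConst k p ≠ ∞ :=
  ENNReal.mul_ne_top ENNReal.ofNat_ne_top (ENNReal.inv_ne_top.2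
    (ENNReal.rpow_pos (dunklMassLowerBound_pos hk) ENNReal.ofReal_ne_top).ne')

lemma eLpNorm_indicator_radialBand_mul_le {k : ℝ} (hk : -1/2 ≤ k) {p : ℝ≥0∞} (hp0 : p ≠ 0)
    (hptop : p ≠ ∞) (f : ℝ → ℂ) {c : ℝ} (hc : 0 ≤ c) :
    eLpNorm ((radialBand c 2⁻¹).indicator f) ∞ (dunklMeasure k) *
        dunklMassLowerBound k ^ (1 / p.toReal) ≤
      eLpNorm (dunklLocalSup k 1 f) p (dunklMeasure k) :=
  calc _ ≤ eLpNorm ((radialBand c 2⁻¹).indicator f) ∞ (dunklMeasure k) *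
        dunklMeasure k (Icc (c + 4⁻¹) (c + 2⁻¹)) ^ (1 / p.toReal) := by
        gcongr; exact dunklMassLowerBound_le hk hc
    _ ≤ _ := mul_rpow_measure_le_eLpNorm measurableSet_Icc hp0 hptop fun z hz ↦ by
        have hz' : |(c - |z|)| + 2⁻¹ ≤ 1 := by
          rw [abs_of_nonneg (by linarith [hz.1] : (0 : ℝ) ≤ z), abs_sub_comm,
            abs_of_nonneg (by linarith [hz.1])]
          linarith [hz.2]
        rw [dunklLocalSup_eq]
        exact eLpNorm_mono_enorm <|
          enorm_indicator_le_of_subset (radialBand_subset_radialBand hz') f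

theorem dunklLocalSup_le {k : ℝ} (hk : -1/2 ≤ k) {p : ℝ≥0∞} (hp0 : p ≠ 0) (hptop : p ≠ ∞)
    (f : ℝ → ℂ) (y : ℝ) :
    dunklLocalSup k 1 f y ≤
      dunklSupConst k p * eLpNorm (dunklLocalSup k 1 f) p (dunklMeasure k) := by
  set N := eLpNorm (dunklLocalSup k 1 f) p (dunklMeasure k)
  set m := dunklMassLowerBound k ^ (1 / p.toReal)
  have hmass := dunklMassLowerBound_pos (by linarith : -1 < k)
  have hm0 : m ≠ 0 := (ENNReal.rpow_pos hmass ENNReal.ofReal_ne_top).ne'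
  have hmtop : m ≠ ∞ := ENNReal.rpow_ne_top_of_ne_zero hmass.ne' ENNReal.ofReal_ne_top
  have hband : ∀ c, 0 ≤ c →
      eLpNorm ((radialBand c 2⁻¹).indicator f) ∞ (dunklMeasure k) ≤ N * m⁻¹ := fun c hc ↦
    (ENNReal.le_div_iff_mul_le (.inl hm0) (.inl hmtop)).2
      (eLpNorm_indicator_radialBand_mul_le hk hp0 hptop f hc)
  calc dunklLocalSup k 1 f y = eLpNorm ((radialBand |y| 1).indicator f) ∞ (dunklMeasure k) :=
        dunklLocalSup_eq k 1 f y
    _ ≤ eLpNorm ((radialBand (max (|y| - 2⁻¹) 0) 2⁻¹).indicator f) ∞ (dunklMeasure k) +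
          eLpNorm ((radialBand |y| 2⁻¹).indicator f) ∞ (dunklMeasure k) +
          eLpNorm ((radialBand (|y| + 2⁻¹) 2⁻¹).indicator f) ∞ (dunklMeasure k) :=
        (eLpNorm_mono_enorm <| enorm_indicator_le_of_subset (radialBand_one_subset |y|) f).trans <|
          (eLpNorm_top_indicator_union_le _ _ f).trans <|
            add_le_add_left (eLpNorm_top_indicator_union_le _ _ f) _
    _ ≤ N * m⁻¹ + N * m⁻¹ + N * m⁻¹ := by
        gcongr <;> apply hband <;> positivity
    _ = dunklSupConst k p * N := by rw [dunklSupConst]; ring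

/-- For `1 ≤ p₁ ≤ p₂ ≤ ∞`, there is `C > 0` with `‖f‖_{∞,p₂} ≤ C ‖f‖_{∞,p₁}`
for every measurable `f`. -/
theorem stmt11 (k : ℝ) (hk : -1/2 < k) (p₁ p₂ : ℝ≥0∞) (hp₁ : 1 ≤ p₁) (hp : p₁ ≤ p₂) :
    ∃ C : ℝ≥0∞, 0 < C ∧ C ≠ ⊤ ∧ ∀ f : ℝ → ℂ, Measurable f →
      wNorm k p₂ f ≤ C * wNorm k p₁ f := by
  rcases eq_or_ne p₁ ∞ with rfl | hp₁top
  · rw [top_le_iff.1 hp]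
    exact ⟨1, one_pos, ENNReal.one_ne_top, fun f _ ↦ (one_mul _).ge⟩
  have hk' : -1 < k := by linarith
  have hp₁0 : p₁ ≠ 0 := (zero_lt_one.trans_le hp₁).ne'
  have hp₂0 : p₂ ≠ 0 := (zero_lt_one.trans_le (hp₁.trans hp)).ne'
  refine ⟨dunklSupConst k p₁ ^ (1 - p₁.toReal / p₂.toReal),
    ENNReal.rpow_pos (dunklSupConst_pos hk' p₁) (dunklSupConst_ne_top hk' p₁),
    ENNReal.rpow_ne_top_of_ne_zero (dunklSupConst_pos hk' p₁).ne' (dunklSupConst_ne_top hk' p₁),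
    fun f _ ↦ ?_⟩
  simp only [wNorm, rNorm_eq_eLpNorm k 1 hp₁0, rNorm_eq_eLpNorm k 1 hp₂0]
  exact eLpNorm_le_rpow_mul_eLpNorm_of_forall_le hp₁0 hp₁top hp (dunklSupConst_pos hk' p₁).ne'
    (dunklSupConst_ne_top hk' p₁) (dunklLocalSup_le hk.le hp₁0 hp₁top f)
end

section
/- Let 1 ≤ p₁ ≤ p₂ ≤ ∞. There exists a constant C > 0, not depending on r, such that for every r > 0 and every μ-measurable function f on ℝ, _r‖f‖_{∞,p₂} ≤ C μ(B(0,r))^{1/p₂ - 1/p₁} · _r‖f‖_{∞,p₁}. -/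
open MeasureTheory Set
open scoped ENNReal

lemma c_pos (k : ℝ) (hk : -1/2 < k) : 0 < (2 ^ (k + 1) * Real.Gamma (k + 1))⁻¹ := by
  have h1 : (0:ℝ) < 2 ^ (k+1) := Real.rpow_pos_of_pos (by norm_num) _
  have h2 : 0 < Real.Gamma (k+1) := Real.Gamma_pos_of_pos (by linarith)
  positivity

lemma measurableSet_ann (a b : ℝ) : MeasurableSet {x : ℝ | a < |x| ∧ |x| < b} := by
  have : {x : ℝ | a < |x| ∧ |x| < b} = (fun x : ℝ => |x|) ⁻¹' (Ioo a b) := rfl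
  rw [this]
  exact measurableSet_Ioo.preimage (measurable_abs)

lemma lint_Ioo (k : ℝ) (hk : -1/2 < k) {a b : ℝ} (ha : 0 ≤ a) (hab : a ≤ b) :
    ∫⁻ x in Ioo a b,
        ENNReal.ofReal ((2 ^ (k + 1) * Real.Gamma (k + 1))⁻¹ * |x| ^ (2 * k + 1)) ∂volume
      = ENNReal.ofReal
          ((2 ^ (k + 1) * Real.Gamma (k + 1))⁻¹ * ((b ^ (2*k+2) - a ^ (2*k+2)) / (2*k+2))) := by
  set c := (2 ^ (k + 1) * Real.Gamma (k + 1))⁻¹ with hc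
  have hcpos : 0 < c := c_pos k hk
  have hexp : (-1:ℝ) < 2*k+1 := by linarith
  have hInt : IntegrableOn (fun x : ℝ => c * x ^ (2*k+1)) (Ioo a b) volume := by
    have h1 : IntervalIntegrable (fun x : ℝ => x ^ (2*k+1)) volume a b :=
      intervalIntegral.intervalIntegrable_rpow' hexp
    have h2 := (h1.const_mul c)
    rw [intervalIntegrable_iff_integrableOn_Ioc_of_le hab] at h2
    exact h2.mono_set Ioo_subset_Ioc_self
  have hcong : ∫⁻ x in Ioo a b,
      ENNReal.ofReal (c * |x| ^ (2 * k + 1)) ∂volume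
      = ∫⁻ x in Ioo a b, ENNReal.ofReal (c * x ^ (2 * k + 1)) ∂volume := by
    apply setLIntegral_congr_fun measurableSet_Ioo
    exact fun x hx => by simp only [abs_of_pos (lt_of_le_of_lt ha hx.1)]
  rw [hcong, ← ofReal_integral_eq_lintegral_ofReal hInt]
  · congr 1
    rw [MeasureTheory.integral_const_mul, ← integral_Ioc_eq_integral_Ioo,
      ← intervalIntegral.integral_of_le hab, integral_rpow (Or.inl hexp)]
    have : 2*k+1+1 = 2*k+2 := by ring
    rw [this]
  · apply (ae_restrict_iff' measurableSet_Ioo).2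
    exact ae_of_all _ fun x hx =>
      mul_nonneg hcpos.le (Real.rpow_nonneg (le_trans ha hx.1.le) _)

lemma mu_ann (k : ℝ) (hk : -1/2 < k) {a b : ℝ} (ha : 0 ≤ a) (hab : a ≤ b) :
    dunklMeasure k {x : ℝ | a < |x| ∧ |x| < b}
      = ENNReal.ofReal
          (2 * ((2 ^ (k + 1) * Real.Gamma (k + 1))⁻¹ * ((b ^ (2*k+2) - a ^ (2*k+2)) / (2*k+2)))) := by
  have hcpos := c_pos k hk
  have hm : (0:ℝ) < 2*k+2 := by linarith
  have hba : a ^ (2*k+2) ≤ b ^ (2*k+2) := Real.rpow_le_rpow ha hab hm.le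
  have hnn : 0 ≤ (2 ^ (k + 1) * Real.Gamma (k + 1))⁻¹ * ((b ^ (2*k+2) - a ^ (2*k+2)) / (2*k+2)) :=
    mul_nonneg hcpos.le (div_nonneg (by linarith) hm.le)
  have hS : {x : ℝ | a < |x| ∧ |x| < b} = Ioo (-b) (-a) ∪ Ioo a b := by
    ext x
    simp only [mem_setOf_eq, mem_union, mem_Ioo]
    rcases le_or_gt x 0 with hx | hx
    · rw [abs_of_nonpos hx]
      constructor
      · rintro ⟨h1, h2⟩; exact Or.inl ⟨by linarith, by linarith⟩
      · rintro (⟨h1, h2⟩ | ⟨h1, h2⟩) <;> constructor <;> linarith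
    · rw [abs_of_pos hx]
      constructor
      · rintro ⟨h1, h2⟩; exact Or.inr ⟨h1, h2⟩
      · rintro (⟨h1, h2⟩ | ⟨h1, h2⟩) <;> constructor <;> linarith
  have hdisj : Disjoint (Ioo (-b) (-a)) (Ioo a b) := by
    rw [Set.disjoint_left]
    rintro x ⟨h1, h2⟩ ⟨h3, h4⟩
    linarith
  rw [dunklMeasure, withDensity_apply _ (measurableSet_ann a b), hS,
    lintegral_union measurableSet_Ioo hdisj]
  have hneg : ∫⁻ x in Ioo (-b) (-a),
      ENNReal.ofReal ((2 ^ (k + 1) * Real.Gamma (k + 1))⁻¹ * |x| ^ (2 * k + 1)) ∂volume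
      = ∫⁻ x in Ioo a b,
      ENNReal.ofReal ((2 ^ (k + 1) * Real.Gamma (k + 1))⁻¹ * |x| ^ (2 * k + 1)) ∂volume := by
    have hpre : (Neg.neg : ℝ → ℝ) ⁻¹' (Ioo (-b) (-a)) = Ioo a b := by
      ext x; simp only [mem_preimage, mem_Ioo]; constructor <;> rintro ⟨h1, h2⟩ <;>
        constructor <;> linarith
    have := (Measure.measurePreserving_neg (volume : Measure ℝ)).setLIntegral_comp_preimage_emb
      (MeasurableEquiv.neg ℝ).measurableEmbedding
      (fun x => ENNReal.ofReal ((2 ^ (k + 1) * Real.Gamma (k + 1))⁻¹ * |x| ^ (2 * k + 1)))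
      (Ioo (-b) (-a))
    rw [hpre] at this
    rw [← this]
    apply lintegral_congr
    intro x
    simp only [abs_neg]
  rw [hneg, lint_Ioo k hk ha hab, ← ENNReal.ofReal_add hnn hnn]
  congr 1; ring

lemma mu_zero_singleton (k : ℝ) : dunklMeasure k {(0:ℝ)} = 0 :=
  (withDensity_absolutelyContinuous _ _) (by simp)

lemma mu_Ioo (k : ℝ) (hk : -1/2 < k) {r : ℝ} (hr : 0 < r) :
    dunklMeasure k (Ioo (-r) r)
      = ENNReal.ofReal
          (2 * ((2 ^ (k + 1) * Real.Gamma (k + 1))⁻¹ * (r ^ (2*k+2) / (2*k+2)))) := by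
  have hm : (0:ℝ) < 2*k+2 := by linarith
  have h1 : dunklMeasure k (Ioo (-r) r) = dunklMeasure k {x : ℝ | 0 < |x| ∧ |x| < r} := by
    apply le_antisymm
    · have hsub : Ioo (-r) r ⊆ {x : ℝ | 0 < |x| ∧ |x| < r} ∪ {0} := by
        rintro x ⟨h1, h2⟩
        rcases eq_or_ne x 0 with rfl | hx
        · exact Or.inr rfl
        · exact Or.inl ⟨abs_pos.2 hx, abs_lt.2 ⟨h1, h2⟩⟩
      calc dunklMeasure k (Ioo (-r) r) ≤ dunklMeasure k ({x : ℝ | 0 < |x| ∧ |x| < r} ∪ {0}) :=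
            measure_mono hsub
        _ ≤ dunklMeasure k {x : ℝ | 0 < |x| ∧ |x| < r} + dunklMeasure k {0} := measure_union_le _ _
        _ = dunklMeasure k {x : ℝ | 0 < |x| ∧ |x| < r} := by rw [mu_zero_singleton]; simp
    · apply measure_mono
      rintro x ⟨h1, h2⟩
      exact abs_lt.1 h2
  rw [h1, mu_ann k hk le_rfl hr.le, Real.zero_rpow (by positivity), sub_zero]

lemma mu_Ioo_pos (k : ℝ) (hk : -1/2 < k) {r : ℝ} (hr : 0 < r) :
    dunklMeasure k (Ioo (-r) r) ≠ 0 := by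
  rw [mu_Ioo k hk hr]
  have hc := c_pos k hk
  have hm : (0:ℝ) < 2*k+2 := by linarith
  have : (0:ℝ) < r ^ (2*k+2) := Real.rpow_pos_of_pos hr _
  simp only [ne_eq, ENNReal.ofReal_eq_zero, not_le]
  positivity

lemma mu_Ioo_ne_top (k : ℝ) (hk : -1/2 < k) {r : ℝ} (hr : 0 < r) :
    dunklMeasure k (Ioo (-r) r) ≠ ⊤ := by
  rw [mu_Ioo k hk hr]; exact ENNReal.ofReal_ne_top

lemma add_rpow_le (u L m : ℝ) (hu : 0 ≤ u) (hL : 0 ≤ L) (hm : 1 ≤ m) :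
    u ^ m + L ^ m ≤ (u + L) ^ m := by
  have h := NNReal.add_rpow_le_rpow_add u.toNNReal L.toNNReal hm
  have h2 := (NNReal.coe_le_coe).2 h
  push_cast at h2
  rwa [Real.coe_toNNReal _ hu, Real.coe_toNNReal _ hL] at h2

/-- measure of annulus of width `r/2` starting at `u ≥ 0` is at least `2^{-(2k+2)}` times
the measure of `Ioo (-r) r`. -/
lemma mu_E_ge (k : ℝ) (hk : -1/2 < k) {r u : ℝ} (hr : 0 < r) (hu : 0 ≤ u) :
    ENNReal.ofReal ((2:ℝ) ^ (-(2*k+2))) * dunklMeasure k (Ioo (-r) r)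
      ≤ dunklMeasure k {x : ℝ | u < |x| ∧ |x| < u + r/2} := by
  have hc := c_pos k hk
  have hm : (0:ℝ) < 2*k+2 := by linarith
  have hm1 : (1:ℝ) ≤ 2*k+2 := by linarith
  rw [mu_Ioo k hk hr, mu_ann k hk hu (by linarith), ← ENNReal.ofReal_mul (by positivity)]
  apply ENNReal.ofReal_le_ofReal
  have key : (2:ℝ) ^ (-(2*k+2)) * r ^ (2*k+2) ≤ (u + r/2) ^ (2*k+2) - u ^ (2*k+2) := by
    have h1 : (2:ℝ) ^ (-(2*k+2)) * r ^ (2*k+2) = (r/2) ^ (2*k+2) := by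
      rw [Real.rpow_neg (by norm_num), Real.div_rpow hr.le (by norm_num)]
      field_simp
    rw [h1]
    have := add_rpow_le u (r/2) (2*k+2) hu (by linarith) hm1
    linarith
  have h2 : (0:ℝ) ≤ (2:ℝ) ^ (-(2*k+2)) := Real.rpow_nonneg (by norm_num) _
  have h3 := mul_le_mul_of_nonneg_left key
    (show (0:ℝ) ≤ 2 * (2 ^ (k + 1) * Real.Gamma (k + 1))⁻¹ / (2*k+2) by positivity)
  calc (2:ℝ) ^ (-(2*k+2)) * (2 * ((2 ^ (k + 1) * Real.Gamma (k + 1))⁻¹ * (r ^ (2*k+2) / (2*k+2))))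
      = 2 * (2 ^ (k + 1) * Real.Gamma (k + 1))⁻¹ / (2*k+2) *
        ((2:ℝ) ^ (-(2*k+2)) * r ^ (2*k+2)) := by ring
    _ ≤ 2 * (2 ^ (k + 1) * Real.Gamma (k + 1))⁻¹ / (2*k+2) *
        ((u + r/2) ^ (2*k+2) - u ^ (2*k+2)) := h3
    _ = 2 * ((2 ^ (k + 1) * Real.Gamma (k + 1))⁻¹ *
        (((u + r/2) ^ (2*k+2) - u ^ (2*k+2)) / (2*k+2))) := by ring

lemma key (k : ℝ) (hk : -1/2 < k) (q : ℝ) (hq : 1 ≤ q) :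
    ∃ D : ℝ≥0∞, 0 < D ∧ D ≠ ⊤ ∧ ∀ r : ℝ, 0 < r → ∀ f : ℝ → ℂ, ∀ y : ℝ,
      eLpNorm ((dunklBall y r).indicator f) ⊤ (dunklMeasure k) ≤
        D * (dunklMeasure k (Ioo (-r) r)) ^ (-(1/q)) *
          (∫⁻ y', (eLpNorm ((dunklBall y' r).indicator f) ⊤ (dunklMeasure k)) ^ q
            ∂(dunklMeasure k)) ^ (1/q) := by
  have hq0 : (0:ℝ) < q := lt_of_lt_of_le one_pos hq
  set ε : ℝ≥0∞ := ENNReal.ofReal ((2:ℝ) ^ (-(2*k+2))) with hεdef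
  have hε0 : ε ≠ 0 := by
    simp only [hεdef, ne_eq, ENNReal.ofReal_eq_zero, not_le]
    exact Real.rpow_pos_of_pos (by norm_num) _
  have hεt : ε ≠ ⊤ := ENNReal.ofReal_ne_top
  have hεrpos : (0:ℝ≥0∞) < ε ^ (-(1/q)) := ENNReal.rpow_pos ((zero_le : 0 ≤ ε).lt_of_ne (Ne.symm hε0)) hεt
  have hεrtop : ε ^ (-(1/q)) ≠ ⊤ := by
    rw [ENNReal.rpow_neg, ne_eq, ENNReal.inv_eq_top]
    exact (ENNReal.rpow_pos ((zero_le : 0 ≤ ε).lt_of_ne (Ne.symm hε0)) hεt).ne'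
  refine ⟨2 * ε ^ (-(1/q)), ENNReal.mul_pos (by norm_num) hεrpos.ne', ENNReal.mul_ne_top (by norm_num) hεrtop, ?_⟩
  intro r hr f y
  set μ := dunklMeasure k with hμdef
  set g : ℝ → ℝ≥0∞ := fun y' => eLpNorm ((dunklBall y' r).indicator f) ⊤ μ with hgdef
  set I := ∫⁻ y', g y' ^ q ∂μ with hIdef
  set μB := μ (Ioo (-r) r) with hμBdef
  have hμB0 : μB ≠ 0 := mu_Ioo_pos k hk hr
  have hμBt : μB ≠ ⊤ := mu_Ioo_ne_top k hk hr
  set w := ε * μB with hwdef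
  have hw0 : w ≠ 0 := mul_ne_zero hε0 hμB0
  have hwt : w ≠ ⊤ := ENNReal.mul_ne_top hεt hμBt
  set t := |y| with htdef
  have ht0 : 0 ≤ t := abs_nonneg y
  set u₁ := max (t - r/2) 0 with hu₁def
  set u₂ := max t (3*r/2) with hu₂def
  have hu₁0 : 0 ≤ u₁ := le_max_right _ _
  have hu₂0 : 0 ≤ u₂ := le_trans (by linarith) (le_max_right t (3*r/2))
  -- the "ball" bound
  have hzbound : ∀ z ∈ dunklBall y r, t - r < |z| ∧ |z| < t + r := by
    intro z hz
    by_cases hy : y = 0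
    · rw [dunklBall, if_pos hy] at hz
      have : |z| < r := abs_lt.2 ⟨hz.1, hz.2⟩
      have ht : t = 0 := by rw [htdef, hy, abs_zero]
      constructor <;> [linarith [abs_nonneg z]; linarith]
    · rw [dunklBall, if_neg hy] at hz
      obtain ⟨h1, h2⟩ := hz
      exact ⟨lt_of_le_of_lt (le_max_right 0 (t - r)) h1, h2⟩
  -- covering
  have hcover : ∀ z ∈ dunklBall y r, z ≠ 0 →
      z ∈ {z : ℝ | 0 < |z| ∧ u₁ - r/2 ≤ |z| ∧ |z| ≤ u₁ + r} ∨
      z ∈ {z : ℝ | 0 < |z| ∧ u₂ - r/2 ≤ |z| ∧ |z| ≤ u₂ + r} := by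
    intro z hz hz0
    obtain ⟨hz1, hz2⟩ := hzbound z hz
    have hz0' : 0 < |z| := abs_pos.2 hz0
    by_cases hcase : |z| ≤ u₁ + r
    · left
      refine ⟨hz0', ?_, hcase⟩
      rcases le_total (t - r/2) 0 with h | h
      · rw [hu₁def, max_eq_right h]; linarith
      · rw [hu₁def, max_eq_left h]; linarith
    · right
      push_neg at hcase
      refine ⟨hz0', ?_, ?_⟩
      · rcases le_total t (3*r/2) with h | h
        · rw [hu₂def, max_eq_right h]; linarith
        · rw [hu₂def, max_eq_left h]
          have h₁ : u₁ = t - r/2 := max_eq_left (by linarith)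
          rw [h₁] at hcase; linarith
      · have := le_max_left t (3*r/2); linarith
  -- annulus is inside nearby balls
  have hsubB : ∀ u : ℝ, 0 ≤ u → ∀ y' ∈ {x : ℝ | u < |x| ∧ |x| < u + r/2},
      {z : ℝ | 0 < |z| ∧ u - r/2 ≤ |z| ∧ |z| ≤ u + r} ⊆ dunklBall y' r := by
    intro u hu y' hy' z hzmem
    obtain ⟨hy'1, hy'2⟩ := hy'
    obtain ⟨hz0, hzl, hzu⟩ := hzmem
    have hy'abs : 0 < |y'| := lt_of_le_of_lt hu hy'1
    have hy'0 : y' ≠ 0 := fun h => by simp [h] at hy'abs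
    rw [dunklBall, if_neg hy'0]
    refine ⟨max_lt hz0 (by linarith), by linarith⟩
  -- monotonicity of eLpNorm under set inclusion
  have hstepB : ∀ (A : Set ℝ) (y' : ℝ), A ⊆ dunklBall y' r →
      eLpNorm (A.indicator f) ⊤ μ ≤ g y' := by
    intro A y' hsub
    apply eLpNorm_mono
    intro z
    by_cases hz : z ∈ A
    · rw [indicator_of_mem hz, indicator_of_mem (hsub hz)]
    · rw [indicator_of_notMem hz]; simp
  -- bound on each annulus piece
  have hbound : ∀ u : ℝ, 0 ≤ u →
      eLpNorm (({z : ℝ | 0 < |z| ∧ u - r/2 ≤ |z| ∧ |z| ≤ u + r}).indicator f) ⊤ μ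
        ≤ (I / w) ^ (1/q) := by
    intro u hu
    set A := {z : ℝ | 0 < |z| ∧ u - r/2 ≤ |z| ∧ |z| ≤ u + r} with hAdef
    set E := {x : ℝ | u < |x| ∧ |x| < u + r/2} with hEdef
    set a := eLpNorm (A.indicator f) ⊤ μ with hadef
    have hE : MeasurableSet E := measurableSet_ann _ _
    have h1 : ∀ y' ∈ E, a ≤ g y' := fun y' hy' => hstepB A y' (hsubB u hu y' hy')
    have h2 : a ^ q * w ≤ I := by
      calc a ^ q * w ≤ a ^ q * μ E := mul_le_mul_right (mu_E_ge k hk hr hu) _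
        _ = ∫⁻ y', E.indicator (fun _ => a ^ q) y' ∂μ := by
            rw [lintegral_indicator hE, setLIntegral_const, mul_comm]
        _ ≤ I := by
            apply lintegral_mono
            intro y'
            by_cases hy' : y' ∈ E
            · rw [indicator_of_mem hy']
              exact ENNReal.rpow_le_rpow (h1 y' hy') hq0.le
            · rw [indicator_of_notMem hy']; exact zero_le
    have h3 : a ^ q ≤ I / w := (ENNReal.le_div_iff_mul_le (Or.inl hw0) (Or.inl hwt)).2 h2
    calc a = (a ^ q) ^ (1/q) := by
          rw [← ENNReal.rpow_mul, mul_one_div_cancel hq0.ne', ENNReal.rpow_one]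
      _ ≤ (I / w) ^ (1/q) := ENNReal.rpow_le_rpow h3 (by positivity)
  -- a.e. z ≠ 0
  have h0ae : ∀ᵐ z ∂μ, z ≠ 0 := by
    rw [ae_iff]
    have : {z : ℝ | ¬ z ≠ 0} = {0} := by ext z; simp
    rw [this]
    exact mu_zero_singleton k
  -- step A : g y ≤ sum of the two pieces
  have hstepA : g y ≤ (I / w) ^ (1/q) + (I / w) ^ (1/q) := by
    set A₁ := {z : ℝ | 0 < |z| ∧ u₁ - r/2 ≤ |z| ∧ |z| ≤ u₁ + r} with hA₁def
    set A₂ := {z : ℝ | 0 < |z| ∧ u₂ - r/2 ≤ |z| ∧ |z| ≤ u₂ + r} with hA₂def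
    have hae : ∀ᵐ z ∂μ, (‖(dunklBall y r).indicator f z‖₊ : ℝ≥0∞)
        ≤ eLpNormEssSup (A₁.indicator f) μ + eLpNormEssSup (A₂.indicator f) μ := by
      filter_upwards [h0ae, ae_le_eLpNormEssSup (f := A₁.indicator f) (μ := μ),
        ae_le_eLpNormEssSup (f := A₂.indicator f) (μ := μ)] with z hz0 h1 h2
      by_cases hz : z ∈ dunklBall y r
      · rcases hcover z hz hz0 with hA | hA
        · rw [indicator_of_mem hz]
          calc (‖f z‖₊ : ℝ≥0∞) = ‖A₁.indicator f z‖₊ := by rw [indicator_of_mem hA]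
            _ ≤ eLpNormEssSup (A₁.indicator f) μ := h1
            _ ≤ _ := le_add_right le_rfl
        · rw [indicator_of_mem hz]
          calc (‖f z‖₊ : ℝ≥0∞) = ‖A₂.indicator f z‖₊ := by rw [indicator_of_mem hA]
            _ ≤ eLpNormEssSup (A₂.indicator f) μ := h2
            _ ≤ _ := le_add_left le_rfl
      · rw [indicator_of_notMem hz]; simp
    have hg_le : g y ≤ eLpNormEssSup (A₁.indicator f) μ + eLpNormEssSup (A₂.indicator f) μ := by
      rw [hgdef]
      simp only [eLpNorm_exponent_top]
      exact essSup_le_of_ae_le _ hae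
    refine hg_le.trans (add_le_add ?_ ?_)
    · have := hbound u₁ hu₁0
      rwa [eLpNorm_exponent_top] at this
    · have := hbound u₂ hu₂0
      rwa [eLpNorm_exponent_top] at this
  -- final algebra
  have hεq0 : ε ^ (1/q) ≠ 0 := (ENNReal.rpow_pos ((zero_le : 0 ≤ ε).lt_of_ne (Ne.symm hε0)) hεt).ne'
  have hεqt : ε ^ (1/q) ≠ ⊤ := ENNReal.rpow_ne_top_of_nonneg (by positivity) hεt
  have halg : (I / w) ^ (1/q) = ε ^ (-(1/q)) * μB ^ (-(1/q)) * I ^ (1/q) := by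
    rw [ENNReal.div_rpow_of_nonneg _ _ (by positivity : (0:ℝ) ≤ 1/q), hwdef,
      ENNReal.mul_rpow_of_nonneg _ _ (by positivity : (0:ℝ) ≤ 1/q),
      div_eq_mul_inv, ENNReal.mul_inv (Or.inl hεq0) (Or.inl hεqt),
      ENNReal.rpow_neg, ENNReal.rpow_neg]
    ring
  calc g y ≤ (I / w) ^ (1/q) + (I / w) ^ (1/q) := hstepA
    _ = 2 * ((I / w) ^ (1/q)) := (two_mul _).symm
    _ = 2 * ε ^ (-(1/q)) * μB ^ (-(1/q)) * I ^ (1/q) := by rw [halg]; ring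

/-- For `1 ≤ p₁ ≤ p₂ ≤ ∞`, there is `C > 0` not depending on `r` such that
`_r‖f‖_{∞,p₂} ≤ C μ(B(0,r))^{1/p₂ - 1/p₁} · _r‖f‖_{∞,p₁}` for every `r > 0` and measurable `f`. -/
theorem stmt13 (k : ℝ) (hk : -1/2 < k) (p₁ p₂ : ℝ≥0∞) (hp₁ : 1 ≤ p₁) (hp : p₁ ≤ p₂) :
    ∃ C : ℝ≥0∞, 0 < C ∧ C ≠ ⊤ ∧ ∀ r : ℝ, 0 < r → ∀ f : ℝ → ℂ, Measurable f →
      rNorm k r p₂ f ≤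
        C * dunklMeasure k (Set.Ioo (-r) r) ^ (1 / p₂.toReal - 1 / p₁.toReal) * rNorm k r p₁ f := by
  by_cases hp₁top : p₁ = ⊤
  · have hp₂top : p₂ = ⊤ := top_le_iff.1 (hp₁top ▸ hp)
    refine ⟨1, one_pos, ENNReal.one_ne_top, ?_⟩
    intro r hr f hf
    subst hp₁top; subst hp₂top
    simp [ENNReal.toReal_top, ENNReal.rpow_zero]
  · have hq₁1 : 1 ≤ p₁.toReal := by
      rw [← ENNReal.toReal_one]; exact ENNReal.toReal_mono hp₁top hp₁
    obtain ⟨D, hD0, hDt, hkey⟩ := key k hk p₁.toReal hq₁1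
    have hq₁0 : (0:ℝ) < p₁.toReal := lt_of_lt_of_le one_pos hq₁1
    refine ⟨max 1 D, lt_of_lt_of_le one_pos (le_max_left 1 D),
      (max_lt ENNReal.one_lt_top hDt.lt_top).ne, ?_⟩
    intro r hr f hf
    have hμB0 : dunklMeasure k (Ioo (-r) r) ≠ 0 := mu_Ioo_pos k hk hr
    have hμBt : dunklMeasure k (Ioo (-r) r) ≠ ⊤ := mu_Ioo_ne_top k hk hr
    have hμBpos : 0 < dunklMeasure k (Ioo (-r) r) := zero_le.lt_of_ne (Ne.symm hμB0)
    have hg := hkey r hr f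
    by_cases hp₂top : p₂ = ⊤
    · subst hp₂top
      simp only [rNorm, if_pos rfl, if_neg hp₁top, ENNReal.toReal_top]
      rw [show (1:ℝ)/0 - 1/p₁.toReal = -(1/p₁.toReal) by norm_num]
      refine essSup_le_of_ae_le _ ?_
      apply ae_of_all
      intro y
      exact (hg y).trans (mul_le_mul_left (mul_le_mul_left (le_max_right 1 D) _) _)
    · simp only [rNorm, if_neg hp₁top, if_neg hp₂top]
      set q₁ := p₁.toReal with hq₁def
      set q₂ := p₂.toReal with hq₂def
      set μB := dunklMeasure k (Ioo (-r) r) with hμBdef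
      set g : ℝ → ℝ≥0∞ := fun y => eLpNorm ((dunklBall y r).indicator f) ⊤ (dunklMeasure k)
        with hgdef
      set I := ∫⁻ y, g y ^ q₁ ∂(dunklMeasure k) with hIdef
      set K := I ^ (1/q₁) with hKdef
      have hq₂1 : 1 ≤ q₂ := le_trans hq₁1 (ENNReal.toReal_mono hp₂top hp)
      have hq₂0 : (0:ℝ) < q₂ := lt_of_lt_of_le one_pos hq₂1
      have hq₁₂ : q₁ ≤ q₂ := ENNReal.toReal_mono hp₂top hp
      by_cases hI0 : I = 0
      · have hgy0 : ∀ y, g y = 0 := by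
          intro y
          refine le_antisymm ?_ zero_le
          have := hg y
          rwa [hKdef, hI0, ENNReal.zero_rpow_of_pos (by positivity), mul_zero] at this
        have hL : (∫⁻ y, g y ^ q₂ ∂(dunklMeasure k)) = 0 := by
          rw [show (fun y => g y ^ q₂) = fun _ => (0:ℝ≥0∞) from
            funext fun y => by rw [hgy0 y]; exact ENNReal.zero_rpow_of_pos hq₂0]
          simp
        rw [hL, ENNReal.zero_rpow_of_pos (by positivity)]
        exact zero_le
      · by_cases hIt : I = ⊤
        · have hKt : K = ⊤ := by rw [hKdef, hIt]; exact ENNReal.top_rpow_of_pos (by positivity)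
          rw [hKt, ENNReal.mul_top (mul_ne_zero
            (lt_of_lt_of_le one_pos (le_max_left 1 D)).ne'
            (ENNReal.rpow_pos hμBpos hμBt).ne')]
          exact le_top
        · have hIpos : 0 < I := zero_le.lt_of_ne (Ne.symm hI0)
          have hK0 : K ≠ 0 := (ENNReal.rpow_pos hIpos hIt).ne'
          have hKt : K ≠ ⊤ := ENNReal.rpow_ne_top_of_nonneg (one_div_nonneg.2 hq₁0.le) hIt
          have hμBr0 : μB ^ (-(1/q₁)) ≠ 0 := (ENNReal.rpow_pos hμBpos hμBt).ne'
          have hμBrt : μB ^ (-(1/q₁)) ≠ ⊤ := by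
            rw [ENNReal.rpow_neg, ne_eq, ENNReal.inv_eq_top]
            exact (ENNReal.rpow_pos hμBpos hμBt).ne'
          by_cases hqq : q₁ = q₂
          · rw [← hqq, sub_self, ENNReal.rpow_zero, mul_one]
            exact le_mul_of_one_le_left zero_le (le_max_left 1 D)
          · have hq₁₂' : q₁ < q₂ := lt_of_le_of_ne hq₁₂ hqq
            set M := D * μB ^ (-(1/q₁)) * K with hMdef
            have hMt : M ≠ ⊤ := ENNReal.mul_ne_top (ENNReal.mul_ne_top hDt hμBrt) hKt
            set θ := (q₂ - q₁)/q₂ with hθdef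
            have hθ0 : 0 ≤ θ := div_nonneg (by linarith) hq₂0.le
            have hθ1 : θ ≤ 1 := by
              rw [hθdef, div_le_one hq₂0]; linarith
            have step1 : ∀ y, g y ^ q₂ ≤ M ^ (q₂ - q₁) * g y ^ q₁ := by
              intro y
              calc g y ^ q₂ = g y ^ ((q₂ - q₁) + q₁) := by rw [sub_add_cancel]
                _ = g y ^ (q₂ - q₁) * g y ^ q₁ :=
                    ENNReal.rpow_add_of_nonneg _ _ (by linarith) (by linarith)
                _ ≤ M ^ (q₂ - q₁) * g y ^ q₁ :=
                    mul_le_mul_left (ENNReal.rpow_le_rpow (hg y) (by linarith)) _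
            have step2 : (∫⁻ y, g y ^ q₂ ∂(dunklMeasure k)) ≤ M ^ (q₂ - q₁) * I := by
              calc (∫⁻ y, g y ^ q₂ ∂(dunklMeasure k))
                  ≤ ∫⁻ y, M ^ (q₂ - q₁) * g y ^ q₁ ∂(dunklMeasure k) := lintegral_mono step1
                _ = M ^ (q₂ - q₁) * I :=
                    lintegral_const_mul' _ _ (ENNReal.rpow_ne_top_of_nonneg (by linarith) hMt)
            have step3 : (∫⁻ y, g y ^ q₂ ∂(dunklMeasure k)) ^ (1/q₂)
                ≤ (M ^ (q₂ - q₁) * I) ^ (1/q₂) :=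
              ENNReal.rpow_le_rpow step2 (by positivity)
            have step4 : (M ^ (q₂ - q₁) * I) ^ (1/q₂) = M ^ θ * I ^ (1/q₂) := by
              rw [ENNReal.mul_rpow_of_nonneg _ _ (by positivity : (0:ℝ) ≤ 1/q₂),
                ← ENNReal.rpow_mul, mul_one_div]
            have hid1 : ∀ a b : ℝ, a ≠ 0 → b ≠ 0 → -(1/a) * ((b - a)/b) = 1/b - 1/a := by
              intro a b ha hb; field_simp; ring_nf
            have hid2 : ∀ a b : ℝ, a ≠ 0 → b ≠ 0 → 1/a * ((b - a)/b) + 1/b = 1/a := by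
              intro a b ha hb; field_simp; ring
            have e1 : (μB ^ (-(1/q₁))) ^ θ = μB ^ (1/q₂ - 1/q₁) := by
              rw [← ENNReal.rpow_mul]
              congr 1
              exact hid1 q₁ q₂ hq₁0.ne' hq₂0.ne'
            have e2 : K ^ θ * I ^ (1/q₂) = K := by
              rw [hKdef, ← ENNReal.rpow_mul, ← ENNReal.rpow_add _ _ hI0 hIt]
              congr 1
              exact hid2 q₁ q₂ hq₁0.ne' hq₂0.ne'
            have e3 : M ^ θ * I ^ (1/q₂) = D ^ θ * μB ^ (1/q₂ - 1/q₁) * K := by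
              rw [hMdef, ENNReal.mul_rpow_of_nonneg _ _ hθ0,
                ENNReal.mul_rpow_of_nonneg _ _ hθ0, e1, mul_assoc, e2]
            have hDθ : D ^ θ ≤ max 1 D :=
              calc D ^ θ ≤ (max 1 D) ^ θ := ENNReal.rpow_le_rpow (le_max_right 1 D) hθ0
                _ ≤ (max 1 D) ^ (1:ℝ) :=
                    ENNReal.rpow_le_rpow_of_exponent_le (le_max_left 1 D) hθ1
                _ = max 1 D := ENNReal.rpow_one _
            calc (∫⁻ y, g y ^ q₂ ∂(dunklMeasure k)) ^ (1/q₂)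
                ≤ M ^ θ * I ^ (1/q₂) := step3.trans (le_of_eq step4)
              _ = D ^ θ * μB ^ (1/q₂ - 1/q₁) * K := e3
              _ ≤ max 1 D * μB ^ (1/q₂ - 1/q₁) * K :=
                  mul_le_mul_left (mul_le_mul_left hDθ _) _
end

section
/- Let 1 ≤ p ≤ ∞ and r > 0. The space (L^∞, L^p)_r(μ) = { f ∈ L^0(μ) : _r‖f‖_{∞,p} < ∞ }, equipped with the norm f ↦ _r‖f‖_{∞,p}, is a complex Banach space: _r‖·‖_{∞,p} is a norm on it and every Cauchy sequence in this norm converges in this norm to an element of the space. -/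
open MeasureTheory Set
open scoped ENNReal

/-!
Write `G f y = ‖f‖_{L^∞(μ|B(y,r))}`, so that `_r‖f‖_{∞,p} = ‖G f‖_{L^p(μ)}`. Homogeneity,
subadditivity and Fatou's lemma for `_r‖·‖_{∞,p}` then come from those of the `L^∞` and `L^p`
norms, once `G f` is known to be measurable.

The key estimate is an embedding into `L^∞`. If `t < ‖f‖_∞`, take a point `x₀ ≠ 0` of the
support of `μ` restricted to `{|f| > t}`. The balls are open and symmetric
(`x₀ ∈ B(y,r) ↔ y ∈ B(x₀,r)` away from `0`), so `G f > t` on `B(x₀,r)`, whence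
`t μ(B(x₀,r))^{1/p} ≤ _r‖f‖_{∞,p}`. For the weight `|x|^{2k+1}` the measure `μ(B(x,r))` is
bounded below uniformly in `x`, so a Cauchy sequence for `_r‖·‖_{∞,p}` is uniformly Cauchy
almost everywhere; its a.e. limit is the limit in `_r‖·‖_{∞,p}` by Fatou's lemma.
-/

open Filter
open scoped Topology

section LpFacts

variable {α : Type*} [MeasurableSpace α] {μ : Measure α}

theorem lt_eLpNorm_top_iff {ε : Type*} [ENorm ε] {f : α → ε} {t : ℝ≥0∞} :
    t < eLpNorm f ⊤ μ ↔ μ {x | t < ‖f x‖ₑ} ≠ 0 := by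
  rw [← not_le, not_iff_not, eLpNorm_exponent_top]
  constructor
  · intro h
    refine measure_mono_null (fun x hx => ?_) (ae_iff.1 (enorm_ae_le_eLpNormEssSup f μ))
    exact not_le.2 (h.trans_lt hx)
  · intro h
    refine eLpNormEssSup_le_of_ae_enorm_bound (ae_iff.2 ?_)
    simpa only [not_le] using h

theorem eLpNorm_liminf_le_liminf_eLpNorm {p : ℝ≥0∞} {g : ℕ → α → ℝ≥0∞}
    (hg : ∀ n, AEMeasurable (g n) μ) :
    eLpNorm (fun x => atTop.liminf (g · x)) p μ ≤ atTop.liminf fun n => eLpNorm (g n) p μ := by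
  rcases eq_or_ne p 0 with rfl | hp0
  · simp
  rcases eq_or_ne p ⊤ with rfl | hptop
  · simpa only [eLpNorm_exponent_top, eLpNormEssSup_eq_essSup_enorm, enorm_eq_self]
      using ENNReal.essSup_liminf_le g
  have hq : 0 < p.toReal := ENNReal.toReal_pos hp0 hptop
  simp only [eLpNorm_eq_lintegral_rpow_enorm_toReal hp0 hptop, enorm_eq_self]
  calc (∫⁻ x, atTop.liminf (g · x) ^ p.toReal ∂μ) ^ (1 / p.toReal)
      = (∫⁻ x, atTop.liminf (fun n => g n x ^ p.toReal) ∂μ) ^ (1 / p.toReal) := by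
        congr 2 with x
        exact (ENNReal.orderIsoRpow _ hq).liminf_apply
    _ ≤ (atTop.liminf fun n => ∫⁻ x, g n x ^ p.toReal ∂μ) ^ (1 / p.toReal) := by
        gcongr
        exact lintegral_liminf_le' fun n => (hg n).pow_const _
    _ = atTop.liminf fun n => (∫⁻ x, g n x ^ p.toReal ∂μ) ^ (1 / p.toReal) :=
        (ENNReal.orderIsoRpow _ (one_div_pos.2 hq)).liminf_apply

theorem eLpNorm_const_mul_of_nnreal {p : ℝ≥0∞} (c : NNReal) (g : α → ℝ≥0∞) :
    eLpNorm (fun x => (c : ℝ≥0∞) * g x) p μ = c * eLpNorm g p μ := by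
  rcases eq_or_ne c 0 with rfl | hc
  · simp
  refine le_antisymm (eLpNorm_le_nnreal_smul_eLpNorm_of_ae_le_mul' (by simp) p) ?_
  have hcinv : eLpNorm g p μ ≤ c⁻¹ • eLpNorm (fun x => (c : ℝ≥0∞) * g x) p μ :=
    eLpNorm_le_nnreal_smul_eLpNorm_of_ae_le_mul' (.of_forall fun x => by
      simp [← mul_assoc, ENNReal.coe_inv hc,
        ENNReal.inv_mul_cancel (by simpa) ENNReal.coe_ne_top]) p
  calc (c : ℝ≥0∞) * eLpNorm g p μ
      ≤ c * (c⁻¹ * eLpNorm (fun x => (c : ℝ≥0∞) * g x) p μ) := by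
        gcongr
        simpa [ENNReal.smul_def] using hcinv
    _ = eLpNorm (fun x => (c : ℝ≥0∞) * g x) p μ := by
        rw [← mul_assoc, ← ENNReal.coe_mul, mul_inv_cancel₀ hc, ENNReal.coe_one, one_mul]

theorem exists_ae_tendsto_of_cauchy_eLpNorm_top {E : Type*} [NormedAddCommGroup E]
    [CompleteSpace E] {F : ℕ → α → E}
    (hF : ∀ ε > 0, ∃ N, ∀ m n, N ≤ m → N ≤ n → eLpNorm (F m - F n) ⊤ μ < ε) :
    ∃ f : α → E, ∀ᵐ x ∂μ, Tendsto (F · x) atTop (𝓝 (f x)) := by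
  have hbound : ∀ᵐ x ∂μ, ∀ m n, ‖F m x - F n x‖ₑ ≤ eLpNorm (F m - F n) ⊤ μ := by
    simp only [ae_all_iff, eLpNorm_exponent_top]
    exact fun m n => enorm_ae_le_eLpNormEssSup (F m - F n) μ
  refine ⟨fun x => limUnder atTop (F · x), hbound.mono fun x hx => ?_⟩
  refine CauchySeq.tendsto_limUnder (EMetric.cauchySeq_iff.2 fun ε hε => ?_)
  obtain ⟨N, hN⟩ := hF ε hε
  exact ⟨N, fun m hm n hn => ((edist_eq_enorm_sub _ _).trans_le (hx m n)).trans_lt (hN m n hm hn)⟩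

end LpFacts

section DunklBall

variable {x y r : ℝ}

theorem isOpen_dunklBall (x r : ℝ) : IsOpen (dunklBall x r) := by
  unfold dunklBall
  split_ifs
  · exact isOpen_Ioo
  · exact isOpen_Ioo.preimage continuous_abs

theorem measurableSet_dunklBall (x r : ℝ) : MeasurableSet (dunklBall x r) :=
  (isOpen_dunklBall x r).measurableSet

theorem measurableSet_setOf_mem_dunklBall (r : ℝ) :
    MeasurableSet {q : ℝ × ℝ | q.2 ∈ dunklBall q.1 r} := by
  have hsplit : {q : ℝ × ℝ | q.2 ∈ dunklBall q.1 r} =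
      {q | q.1 = 0 ∧ q.2 ∈ Ioo (-r) r} ∪
        {q | q.1 ≠ 0 ∧ max 0 (|q.1| - r) < |q.2| ∧ |q.2| < |q.1| + r} := by
    ext q
    by_cases h : q.1 = 0 <;> simp [dunklBall, h]
  have h0 : MeasurableSet {q : ℝ × ℝ | q.1 = 0} := measurable_fst (measurableSet_singleton 0)
  rw [hsplit]
  exact (h0.inter (measurable_snd measurableSet_Ioo)).union (h0.compl.inter
    ((measurableSet_lt (measurable_const.max (measurable_fst.abs.sub measurable_const))
      measurable_snd.abs).inter
      (measurableSet_lt measurable_snd.abs (measurable_fst.abs.add measurable_const))))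

theorem mem_dunklBall_self (hx : x ≠ 0) (hr : 0 < r) : x ∈ dunklBall x r := by
  simp only [dunklBall, if_neg hx, mem_ofPred_eq, max_lt_iff]
  exact ⟨⟨abs_pos.2 hx, by linarith⟩, by linarith⟩

theorem mem_dunklBall_symm (hx : x ≠ 0) (hy : y ∈ dunklBall x r) : x ∈ dunklBall y r := by
  simp only [dunklBall, if_neg hx, mem_ofPred_eq, max_lt_iff] at hy
  obtain ⟨⟨hy0, hxy⟩, hyx⟩ := hy
  simp only [dunklBall, if_neg (abs_pos.1 hy0), mem_ofPred_eq, max_lt_iff]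
  exact ⟨⟨abs_pos.2 hx, by linarith⟩, by linarith⟩

theorem Ioo_subset_dunklBall (hr : 0 < r) (x : ℝ) :
    Ioo (max 0 (|x| - r)) (max 0 (|x| - r) + r) ⊆ dunklBall x r := by
  rintro y ⟨hay, hya⟩
  have hy : |y| = y := abs_of_pos ((le_max_left _ _).trans_lt hay)
  unfold dunklBall
  split_ifs with hx
  · subst hx
    rw [abs_zero, zero_sub, max_eq_left (by linarith)] at hay hya
    exact ⟨by linarith, by linarith⟩
  · have : max 0 (|x| - r) ≤ |x| := max_le (abs_nonneg x) (by linarith)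
    exact ⟨by rwa [hy], by linarith⟩

end DunklBall

section Amalgam

variable {E : Type*} [NormedAddCommGroup E] {μ : Measure ℝ} {r : ℝ} {p : ℝ≥0∞} {f g : ℝ → E}

noncomputable def localSupNorm (μ : Measure ℝ) (r : ℝ) (f : ℝ → E) (y : ℝ) : ℝ≥0∞ :=
  eLpNorm f ⊤ (μ.restrict (dunklBall y r))

noncomputable def amalgamNorm (μ : Measure ℝ) (r : ℝ) (p : ℝ≥0∞) (f : ℝ → E) : ℝ≥0∞ :=
  eLpNorm (localSupNorm μ r f) p μ

theorem rNorm_eq_amalgamNorm (k : ℝ) (hp : p ≠ 0) (f : ℝ → ℂ) :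
    rNorm k r p f = amalgamNorm (dunklMeasure k) r p f := by
  have hloc : ∀ y, eLpNorm ((dunklBall y r).indicator f) ⊤ (dunklMeasure k) =
      localSupNorm (dunklMeasure k) r f y :=
    fun y => eLpNorm_indicator_eq_eLpNorm_restrict (measurableSet_dunklBall y r)
  simp only [rNorm, amalgamNorm, hloc]
  split_ifs with hptop
  · rw [hptop, eLpNorm_exponent_top, eLpNormEssSup_eq_essSup_enorm]
    simp only [enorm_eq_self]
  · rw [eLpNorm_eq_lintegral_rpow_enorm_toReal hp hptop]
    simp only [enorm_eq_self]

theorem localSupNorm_congr_ae (h : f =ᵐ[μ] g) : localSupNorm μ r f = localSupNorm μ r g :=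
  funext fun _ => eLpNorm_congr_ae (ae_restrict_of_ae h)

theorem lt_localSupNorm_iff {t : ℝ≥0∞} {y : ℝ} :
    t < localSupNorm μ r f y ↔ μ ({x | t < ‖f x‖ₑ} ∩ dunklBall y r) ≠ 0 := by
  rw [localSupNorm, lt_eLpNorm_top_iff, Measure.restrict_apply' (measurableSet_dunklBall y r)]

theorem measurable_localSupNorm [SFinite μ] (hf : AEStronglyMeasurable f μ) :
    Measurable (localSupNorm μ r f) := by
  rw [localSupNorm_congr_ae hf.ae_eq_mk]
  refine measurable_of_Ioi fun t => ?_
  set S := {q : ℝ × ℝ | q.2 ∈ {x | t < ‖hf.mk f x‖ₑ} ∧ q.2 ∈ dunklBall q.1 r}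
  have hS : MeasurableSet S :=
    (measurable_snd (hf.stronglyMeasurable_mk.enorm measurableSet_Ioi)).inter
      (measurableSet_setOf_mem_dunklBall r)
  have hpre : localSupNorm μ r (hf.mk f) ⁻¹' Ioi t = (fun y => μ (Prod.mk y ⁻¹' S)) ⁻¹' {0}ᶜ := by
    ext y
    exact lt_localSupNorm_iff
  rw [hpre]
  exact measurable_measure_prodMk_left hS (measurableSet_singleton 0).compl

theorem localSupNorm_add_le (f g : ℝ → E) (y : ℝ) :
    localSupNorm μ r (f + g) y ≤ localSupNorm μ r f y + localSupNorm μ r g y := by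
  simp only [localSupNorm, eLpNorm_exponent_top]
  exact eLpNormEssSup_add_le

theorem localSupNorm_neg (f : ℝ → E) : localSupNorm μ r (-f) = localSupNorm μ r f :=
  funext fun _ => eLpNorm_neg f ⊤ _

theorem localSupNorm_smul {𝕜 : Type*} [NormedDivisionRing 𝕜] [Module 𝕜 E] [NormSMulClass 𝕜 E]
    (c : 𝕜) (f : ℝ → E) (y : ℝ) : localSupNorm μ r (c • f) y = ‖c‖ₑ * localSupNorm μ r f y :=
  eLpNorm_const_smul c f ⊤ _

theorem localSupNorm_le_liminf {φ : ℕ → ℝ → E} {ψ : ℝ → E}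
    (hφ : ∀ n, AEStronglyMeasurable (φ n) μ)
    (hlim : ∀ᵐ x ∂μ, Tendsto (φ · x) atTop (𝓝 (ψ x))) (y : ℝ) :
    localSupNorm μ r ψ y ≤ atTop.liminf fun n => localSupNorm μ r (φ n) y :=
  Lp.eLpNorm_lim_le_liminf_eLpNorm (fun n => (hφ n).restrict) ψ (ae_restrict_of_ae hlim)

theorem amalgamNorm_congr_ae (h : f =ᵐ[μ] g) : amalgamNorm μ r p f = amalgamNorm μ r p g := by
  rw [amalgamNorm, amalgamNorm, localSupNorm_congr_ae h]

theorem amalgamNorm_zero : amalgamNorm μ r p (0 : ℝ → E) = 0 := by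
  have h : localSupNorm μ r (0 : ℝ → E) = 0 := funext fun _ => eLpNorm_zero
  rw [amalgamNorm, h, eLpNorm_zero]

theorem amalgamNorm_neg (f : ℝ → E) : amalgamNorm μ r p (-f) = amalgamNorm μ r p f := by
  rw [amalgamNorm, amalgamNorm, localSupNorm_neg]

theorem amalgamNorm_smul {𝕜 : Type*} [NormedDivisionRing 𝕜] [Module 𝕜 E] [NormSMulClass 𝕜 E]
    (c : 𝕜) (f : ℝ → E) : amalgamNorm μ r p (c • f) = ‖c‖ₑ * amalgamNorm μ r p f := by
  rw [amalgamNorm, amalgamNorm, funext (localSupNorm_smul c f)]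
  exact eLpNorm_const_mul_of_nnreal ‖c‖₊ _

theorem amalgamNorm_add_le [SFinite μ] (hp : 1 ≤ p) (hf : AEStronglyMeasurable f μ)
    (hg : AEStronglyMeasurable g μ) :
    amalgamNorm μ r p (f + g) ≤ amalgamNorm μ r p f + amalgamNorm μ r p g :=
  (eLpNorm_mono_enorm fun y => by simpa using localSupNorm_add_le f g y).trans
    (eLpNorm_add_le (measurable_localSupNorm hf).aestronglyMeasurable
      (measurable_localSupNorm hg).aestronglyMeasurable hp)

theorem amalgamNorm_le_liminf [SFinite μ] {φ : ℕ → ℝ → E} {ψ : ℝ → E}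
    (hφ : ∀ n, AEStronglyMeasurable (φ n) μ)
    (hlim : ∀ᵐ x ∂μ, Tendsto (φ · x) atTop (𝓝 (ψ x))) :
    amalgamNorm μ r p ψ ≤ atTop.liminf fun n => amalgamNorm μ r p (φ n) :=
  (eLpNorm_mono_enorm fun y => by simpa using localSupNorm_le_liminf hφ hlim y).trans
    (eLpNorm_liminf_le_liminf_eLpNorm fun n => (measurable_localSupNorm (hφ n)).aemeasurable)

theorem amalgamNorm_lt_top_of_sub [SFinite μ] (hp : 1 ≤ p) (hf : AEStronglyMeasurable f μ)
    (hg : AEStronglyMeasurable g μ) (hg_fin : amalgamNorm μ r p g < ⊤)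
    (hgf_fin : amalgamNorm μ r p (g - f) < ⊤) : amalgamNorm μ r p f < ⊤ :=
  calc amalgamNorm μ r p f = amalgamNorm μ r p (g + -(g - f)) := by rw [neg_sub, add_sub_cancel]
    _ ≤ amalgamNorm μ r p g + amalgamNorm μ r p (g - f) := by
        rw [← amalgamNorm_neg (g - f)]
        exact amalgamNorm_add_le hp hg (hg.sub hf).neg
    _ < ⊤ := ENNReal.add_lt_top.2 ⟨hg_fin, hgf_fin⟩

theorem exists_mul_rpow_le_amalgamNorm (h0 : μ {0} = 0) (hr : 0 < r) (hp : p ≠ 0) {t : ℝ≥0∞}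
    (ht : t < eLpNorm f ⊤ μ) :
    ∃ x, μ (dunklBall x r) ≠ 0 ∧ t * μ (dunklBall x r) ^ (1 / p.toReal) ≤ amalgamNorm μ r p f := by
  set ν := μ.restrict {x | t < ‖f x‖ₑ}
  have hν : ν ≠ 0 := Measure.restrict_eq_zero.not.2 (lt_eLpNorm_top_iff.1 ht)
  have := ae_neBot.2 hν
  have hne : ∀ᵐ x ∂ν, x ≠ 0 := ae_restrict_of_ae (compl_mem_ae_iff.2 h0)
  obtain ⟨x₀, hx₀, hsupp⟩ := (hne.and Measure.support_mem_ae).exists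
  -- `x₀` lies in every ball centred in `B(x₀, r)`, and these balls are open
  have hball : ∀ y ∈ dunklBall x₀ r, 0 < ν (dunklBall y r) := fun y hy =>
    (Measure.mem_support_iff_forall x₀).1 hsupp _
      ((isOpen_dunklBall y r).mem_nhds (mem_dunklBall_symm hx₀ hy))
  have hB : μ (dunklBall x₀ r) ≠ 0 :=
    ((hball x₀ (mem_dunklBall_self hx₀ hr)).trans_le (Measure.restrict_apply_le _ _)).ne'
  refine ⟨x₀, hB, ?_⟩
  calc t * μ (dunklBall x₀ r) ^ (1 / p.toReal)
      = eLpNorm ((dunklBall x₀ r).indicator fun _ => t) p μ := by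
        rw [eLpNorm_indicator_const' (measurableSet_dunklBall x₀ r) hB hp, enorm_eq_self]
    _ ≤ amalgamNorm μ r p f := by
        refine eLpNorm_mono_enorm fun y => ?_
        by_cases hy : y ∈ dunklBall x₀ r
        · rw [indicator_of_mem hy, enorm_eq_self, enorm_eq_self]
          refine (lt_localSupNorm_iff.2 ?_).le
          rw [inter_comm, ← Measure.restrict_apply (measurableSet_dunklBall y r)]
          exact (hball y hy).ne'
        · simp [indicator_of_notMem hy]

theorem eLpNorm_top_mul_le_amalgamNorm (h0 : μ {0} = 0) (hr : 0 < r) (hp : p ≠ 0) {c : ℝ≥0∞}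
    (hc : ∀ x, c ≤ μ (dunklBall x r)) :
    eLpNorm f ⊤ μ * c ^ (1 / p.toReal) ≤ amalgamNorm μ r p f := by
  refine ENNReal.mul_le_of_forall_lt fun t ht s hs => ?_
  obtain ⟨x, -, hx⟩ := exists_mul_rpow_le_amalgamNorm h0 hr hp ht
  calc t * s ≤ t * μ (dunklBall x r) ^ (1 / p.toReal) := by
        gcongr
        exact hs.le.trans (ENNReal.rpow_le_rpow (hc x) (by positivity))
    _ ≤ amalgamNorm μ r p f := hx

theorem amalgamNorm_eq_zero_iff (h0 : μ {0} = 0) (hr : 0 < r) (hp : p ≠ 0) :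
    amalgamNorm μ r p f = 0 ↔ f =ᵐ[μ] 0 := by
  refine ⟨fun h => ?_, fun h => (amalgamNorm_congr_ae h).trans amalgamNorm_zero⟩
  by_contra hf
  have hpos : 0 < eLpNorm f ⊤ μ := by
    rwa [pos_iff_ne_zero, eLpNorm_exponent_top, Ne, eLpNormEssSup_eq_zero_iff]
  obtain ⟨t, ht0, ht⟩ := exists_between hpos
  obtain ⟨x, hx, hle⟩ := exists_mul_rpow_le_amalgamNorm h0 hr hp ht
  rw [h, nonpos_iff_eq_zero, mul_eq_zero, ENNReal.rpow_eq_zero_iff] at hle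
  rcases hle with h | ⟨h, -⟩ | ⟨-, h⟩
  exacts [ht0.ne' h, hx h, (not_lt.2 (by positivity)) h]

theorem exists_tendsto_amalgamNorm_of_cauchy [SFinite μ] [CompleteSpace E] (h0 : μ {0} = 0)
    (hr : 0 < r) (hp : 1 ≤ p) {c : ℝ≥0∞} (hc0 : c ≠ 0) (hc : ∀ x, c ≤ μ (dunklBall x r))
    {F : ℕ → ℝ → E} (hF : ∀ n, AEStronglyMeasurable (F n) μ)
    (hcau : ∀ ε > 0, ∃ N, ∀ m n, N ≤ m → N ≤ n → amalgamNorm μ r p (F m - F n) < ε) :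
    ∃ f, AEStronglyMeasurable f μ ∧ Tendsto (fun n => amalgamNorm μ r p (F n - f)) atTop (𝓝 0) := by
  have hcp : c ^ (1 / p.toReal) ≠ 0 :=
    (ENNReal.rpow_pos_of_nonneg (pos_iff_ne_zero.2 hc0) (by positivity)).ne'
  have hunif : ∀ ε > 0, ∃ N, ∀ m n, N ≤ m → N ≤ n → eLpNorm (F m - F n) ⊤ μ < ε := by
    intro ε hε
    obtain ⟨N, hN⟩ := hcau (ε * c ^ (1 / p.toReal)) (ENNReal.mul_pos hε.ne' hcp)
    refine ⟨N, fun m n hm hn => lt_of_mul_lt_mul_right' (a := c ^ (1 / p.toReal)) ?_⟩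
    exact (eLpNorm_top_mul_le_amalgamNorm h0 hr (zero_lt_one.trans_le hp).ne' hc).trans_lt
      (hN m n hm hn)
  obtain ⟨f, hf⟩ := exists_ae_tendsto_of_cauchy_eLpNorm_top hunif
  refine ⟨f, aestronglyMeasurable_of_tendsto_ae atTop hF hf,
    ENNReal.tendsto_nhds_zero.2 fun ε hε => ?_⟩
  obtain ⟨N, hN⟩ := hcau ε hε
  refine eventually_atTop.2 ⟨N, fun n hn => ?_⟩
  calc amalgamNorm μ r p (F n - f) ≤ atTop.liminf fun m => amalgamNorm μ r p (F n - F m) :=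
        amalgamNorm_le_liminf (fun m => (hF n).sub (hF m))
          (hf.mono fun x hx => tendsto_const_nhds.sub hx)
    _ ≤ ε := liminf_le_of_frequently_le'
        (eventually_atTop.2 ⟨N, fun m hm => (hN n m hn hm).le⟩).frequently

end Amalgam

section DunklMeasure

variable {k : ℝ}

noncomputable def dunklDensity (k x : ℝ) : ℝ≥0∞ :=
  ENNReal.ofReal ((2 ^ (k + 1) * Real.Gamma (k + 1))⁻¹ * |x| ^ (2 * k + 1))

theorem dunklMeasure_eq_withDensity_s14 (k : ℝ) :
    dunklMeasure k = volume.withDensity (dunklDensity k) := rfl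

instance (k : ℝ) : SFinite (dunklMeasure k) := by
  rw [dunklMeasure_eq_withDensity_s14]
  infer_instance

theorem dunklMeasure_singleton_zero (k : ℝ) : dunklMeasure k {0} = 0 :=
  withDensity_absolutelyContinuous _ _ Real.volume_singleton

theorem two_rpow_mul_Gamma_pos (hk : -1 < k) : 0 < 2 ^ (k + 1) * Real.Gamma (k + 1) :=
  mul_pos (Real.rpow_pos_of_pos two_pos _) (Real.Gamma_pos_of_pos (by linarith))

theorem dunklDensity_pos (hk : -1 < k) {x : ℝ} (hx : x ≠ 0) : 0 < dunklDensity k x :=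
  ENNReal.ofReal_pos.2
    (mul_pos (inv_pos.2 (two_rpow_mul_Gamma_pos hk)) (Real.rpow_pos_of_pos (abs_pos.2 hx) _))

theorem dunklDensity_le (hk : -1/2 ≤ k) {x y : ℝ} (h : |x| ≤ |y|) :
    dunklDensity k x ≤ dunklDensity k y := by
  have hc := two_rpow_mul_Gamma_pos (k := k) (by linarith)
  unfold dunklDensity
  gcongr
  linarith

theorem dunklDensity_mul_volume_le (hk : -1/2 ≤ k) {b : ℝ} {s : Set ℝ} (hs : MeasurableSet s)
    (hb : ∀ x ∈ s, |b| ≤ |x|) : dunklDensity k b * volume s ≤ dunklMeasure k s := by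
  rw [dunklMeasure_eq_withDensity_s14, withDensity_apply _ hs, ← setLIntegral_const]
  exact setLIntegral_mono' hs fun x hx => dunklDensity_le hk (hb x hx)

theorem dunklDensity_mul_le_dunklMeasure_dunklBall (hk : -1/2 ≤ k) {r : ℝ} (hr : 0 < r) (x : ℝ) :
    dunklDensity k (r / 2) * ENNReal.ofReal (r / 2) ≤ dunklMeasure k (dunklBall x r) := by
  set a := max 0 (|x| - r)
  have ha : 0 ≤ a := le_max_left _ _
  calc dunklDensity k (r / 2) * ENNReal.ofReal (r / 2)
      = dunklDensity k (r / 2) * volume (Ioo (a + r / 2) (a + r)) := by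
        rw [Real.volume_Ioo]
        ring_nf
    _ ≤ dunklMeasure k (Ioo (a + r / 2) (a + r)) :=
        dunklDensity_mul_volume_le hk measurableSet_Ioo fun y hy => by
          rw [abs_of_pos (by linarith), abs_of_pos (by linarith [hy.1])]
          linarith [hy.1]
    _ ≤ dunklMeasure k (dunklBall x r) :=
        measure_mono ((Ioo_subset_Ioo_left (by linarith)).trans (Ioo_subset_dunklBall hr x))

end DunklMeasure

/-- `(L^∞, L^p)_r(μ)` with the norm `_r‖·‖_{∞,p}` is a complex Banach space: `_r‖·‖_{∞,p}`
satisfies the norm axioms (modulo `μ`-a.e. equality) and every Cauchy sequence converges. -/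
theorem stmt14 (k : ℝ) (hk : -1/2 < k) (p : ℝ≥0∞) (hp : 1 ≤ p) (r : ℝ) (hr : 0 < r) :
    (∀ f : ℝ → ℂ, AEStronglyMeasurable f (dunklMeasure k) →
      (rNorm k r p f = 0 ↔ f =ᵐ[dunklMeasure k] 0)) ∧
    (∀ (f : ℝ → ℂ) (c : ℂ), rNorm k r p (c • f) = (‖c‖₊ : ℝ≥0∞) * rNorm k r p f) ∧
    (∀ f g : ℝ → ℂ, AEStronglyMeasurable f (dunklMeasure k) →
      AEStronglyMeasurable g (dunklMeasure k) →
      rNorm k r p (f + g) ≤ rNorm k r p f + rNorm k r p g) ∧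
    (∀ F : ℕ → ℝ → ℂ,
      (∀ n, AEStronglyMeasurable (F n) (dunklMeasure k)) →
      (∀ n, rNorm k r p (F n) < ⊤) →
      (∀ ε : ℝ≥0∞, 0 < ε → ∃ N : ℕ, ∀ m n : ℕ, N ≤ m → N ≤ n →
        rNorm k r p (F m - F n) < ε) →
      ∃ f : ℝ → ℂ, AEStronglyMeasurable f (dunklMeasure k) ∧ rNorm k r p f < ⊤ ∧
        Filter.Tendsto (fun n => rNorm k r p (F n - f)) Filter.atTop (nhds 0)) := by
  have hp0 : p ≠ 0 := (zero_lt_one.trans_le hp).ne'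
  have h0 := dunklMeasure_singleton_zero k
  have hc0 : dunklDensity k (r / 2) * ENNReal.ofReal (r / 2) ≠ 0 :=
    mul_ne_zero (dunklDensity_pos (by linarith) (by positivity)).ne'
      (ENNReal.ofReal_pos.2 (by positivity)).ne'
  simp only [rNorm_eq_amalgamNorm k hp0]
  refine ⟨fun f _ => amalgamNorm_eq_zero_iff h0 hr hp0, fun f c => amalgamNorm_smul c f,
    fun f g hf hg => amalgamNorm_add_le hp hf hg, fun F hF hfin hcau => ?_⟩
  obtain ⟨f, hf, hlim⟩ := exists_tendsto_amalgamNorm_of_cauchy h0 hr hp hc0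
    (dunklDensity_mul_le_dunklMeasure_dunklBall hk.le hr) hF hcau
  obtain ⟨n, hn⟩ := (hlim.eventually (gt_mem_nhds zero_lt_one)).exists
  exact ⟨f, hf, amalgamNorm_lt_top_of_sub hp hf (hF n) (hfin n) (hn.trans ENNReal.one_lt_top),
    hlim⟩
end
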